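/- arXiv:2408.16852 — 8 statements merged into one kernel-verified Lean document; each statement's English description precedes it below -/
import Mathlib

section
/- Let d ≥ 1, γ > 0, and let D_r and D_n be Borel probability measures on ℝ^d with finite first moments E_{D_r}[‖x‖₂] < ∞ and E_{D_n}[‖x‖₂] < ∞. Then for any two star bodies K, L ∈ S^d(γ), the functional F satisfies the Lipschitz estimate |F(K; D_r, D_n) − F(L; D_r, D_n)| ≤ ((E_{D_r}[‖x‖₂] + E_{D_n}[‖x‖₂]) / γ²) · δ(K, L). -/
open MeasureTheory Metric Set Filter Pointwise

noncomputable section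

abbrev Euc (d : ℕ) : Type := EuclideanSpace ℝ (Fin d)

/-- Radial function of a set: `ρ_K(x) = sup {t > 0 : t • x ∈ K}`. -/
def radialFn {d : ℕ} (K : Set (Euc d)) (x : Euc d) : ℝ :=
  sSup {t : ℝ | 0 < t ∧ t • x ∈ K}

/-- A star body: compact, `0` in the interior, star-shaped about `0`, with radial function
positive and continuous on the unit sphere. -/
def IsStarBody {d : ℕ} (K : Set (Euc d)) : Prop :=
  IsCompact K ∧ (0 : Euc d) ∈ interior K ∧
    (∀ x ∈ K, segment ℝ 0 x ⊆ K) ∧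
    (∀ u ∈ sphere (0 : Euc d) 1, 0 < radialFn K u) ∧
    ContinuousOn (radialFn K) (sphere (0 : Euc d) 1)

/-- The kernel of a star body. -/
def starKernel {d : ℕ} (K : Set (Euc d)) : Set (Euc d) :=
  {x | x ∈ K ∧ ∀ y ∈ K, segment ℝ x y ⊆ K}

/-- Radial metric between star bodies. -/
def radialDist {d : ℕ} (K L : Set (Euc d)) : ℝ :=
  ⨆ u : sphere (0 : Euc d) 1, |radialFn K (u : Euc d) - radialFn L (u : Euc d)|

/-- The adversarial objective `F(K; μ, ν) = E_μ[‖x‖_K] - E_ν[‖x‖_K]`. -/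
def Fobj {d : ℕ} (K : Set (Euc d)) (μ ν : Measure (Euc d)) : ℝ :=
  (∫ x, gauge K x ∂μ) - (∫ x, gauge K x ∂ν)

/-!
For a unit vector `u`, the gauge is `‖u‖_K = ρ_K(u)⁻¹`, and `closedBall 0 γ ⊆ K` gives
`γ ≤ ρ_K(u)`. Hence, writing `x = ‖x‖ • u`,
`|‖x‖_K - ‖x‖_L| = ‖x‖ |ρ_K(u)⁻¹ - ρ_L(u)⁻¹| ≤ ‖x‖ |ρ_K(u) - ρ_L(u)| / γ² ≤ ‖x‖ δ(K, L) / γ²`,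
and integrating against both measures gives the estimate. The gauges are integrable because
they are continuous (the radial functions are continuous on the sphere) and bounded by
`‖x‖ / γ`.
-/

open Topology

lemma abs_inv_sub_inv_le_of_le {γ a b : ℝ} (hγ : 0 < γ) (ha : γ ≤ a) (hb : γ ≤ b) :
    |a⁻¹ - b⁻¹| ≤ |a - b| / γ ^ 2 := by
  have ha₀ : 0 < a := hγ.trans_le ha
  have hb₀ : 0 < b := hγ.trans_le hb
  rw [inv_sub_inv ha₀.ne' hb₀.ne', abs_div, abs_of_pos (mul_pos ha₀ hb₀), abs_sub_comm, sq]
  gcongr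

lemma abs_integral_sub_integral_le {α : Type*} [MeasurableSpace α] {μ : Measure α}
    {f g w : α → ℝ} (hf : Integrable f μ) (hg : Integrable g μ) (hw : Integrable w μ)
    (h : ∀ x, |f x - g x| ≤ w x) :
    |∫ x, f x ∂μ - ∫ x, g x ∂μ| ≤ ∫ x, w x ∂μ := by
  rw [← integral_sub hf hg]
  exact abs_integral_le_integral_abs.trans (integral_mono (hf.sub hg).abs hw h)

section Gauge

variable {E : Type*} [NormedAddCommGroup E] [NormedSpace ℝ E] {s : Set E}

lemma gauge_le_norm_div_of_closedBall_subset {r : ℝ} (hr : 0 < r)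
    (hs : closedBall (0 : E) r ⊆ s) (x : E) : gauge s x ≤ ‖x‖ / r := by
  rw [← gauge_closedBall hr.le x]
  exact gauge_mono (absorbent_nhds_zero (closedBall_mem_nhds 0 hr)) hs x

lemma gauge_eq_norm_mul_gauge_inv_norm_smul (x : E) :
    gauge s x = ‖x‖ * gauge s (‖x‖⁻¹ • x) := by
  rcases eq_or_ne x 0 with rfl | hx
  · simp [gauge_zero]
  · rw [gauge_smul_of_nonneg (inv_nonneg.2 (norm_nonneg x)), smul_eq_mul,
      mul_inv_cancel_left₀ (norm_ne_zero_iff.2 hx)]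

lemma continuous_gauge_of_continuousOn_sphere (hs : s ∈ 𝓝 0)
    (h : ContinuousOn (gauge s) (sphere 0 1)) : Continuous (gauge s) := by
  refine continuous_iff_continuousAt.2 fun x => ?_
  rcases eq_or_ne x 0 with rfl | hx
  · exact continuousAt_gauge_zero hs
  have hnormalize : ContinuousOn (fun y : E => ‖y‖⁻¹ • y) {y | y ≠ 0} :=
    (continuous_norm.continuousOn.inv₀ fun y hy => norm_ne_zero_iff.2 hy).smul continuousOn_id
  have hmaps : MapsTo (fun y : E => ‖y‖⁻¹ • y) {y | y ≠ 0} (sphere 0 1) := fun y hy => by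
    simpa using norm_smul_inv_norm (𝕜 := ℝ) hy
  rw [show gauge s = fun y => ‖y‖ * gauge s (‖y‖⁻¹ • y) from
    funext gauge_eq_norm_mul_gauge_inv_norm_smul]
  exact (continuous_norm.continuousOn.mul (h.comp hnormalize hmaps)).continuousAt
    (isOpen_ne.mem_nhds hx)

lemma integrable_gauge_of_closedBall_subset [MeasurableSpace E] [OpensMeasurableSpace E]
    {μ : Measure E} {r : ℝ} (hr : 0 < r) (hs : closedBall (0 : E) r ⊆ s)
    (hcont : Continuous (gauge s)) (hμ : Integrable (fun x => ‖x‖) μ) :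
    Integrable (gauge s) μ :=
  (hμ.div_const r).mono' hcont.aestronglyMeasurable <| ae_of_all _ fun x => by
    simpa [abs_of_nonneg (gauge_nonneg x)] using gauge_le_norm_div_of_closedBall_subset hr hs x

end Gauge

section Radial

variable {d : ℕ} {K L : Set (Euc d)} {u : Euc d}

lemma bddAbove_radialSet (hK : Bornology.IsBounded K) {x : Euc d} (hx : x ≠ 0) :
    BddAbove {t : ℝ | 0 < t ∧ t • x ∈ K} := by
  obtain ⟨R, hR⟩ := hK.subset_closedBall 0
  refine ⟨R / ‖x‖, fun t ⟨ht, htx⟩ => ?_⟩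
  have := mem_closedBall_zero_iff.1 (hR htx)
  rw [norm_smul, Real.norm_of_nonneg ht.le] at this
  rwa [le_div_iff₀ (norm_pos_iff.2 hx)]

lemma le_radialFn_of_closedBall_subset (hK : Bornology.IsBounded K) {γ : ℝ} (hγ : 0 < γ)
    (hKγ : closedBall 0 γ ⊆ K) (hu : u ∈ sphere 0 1) : γ ≤ radialFn K u := by
  have hu₁ : ‖u‖ = 1 := mem_sphere_zero_iff_norm.1 hu
  refine le_csSup (bddAbove_radialSet hK (ne_zero_of_mem_unit_sphere ⟨u, hu⟩))
    ⟨hγ, hKγ ?_⟩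
  rw [mem_closedBall_zero_iff, norm_smul, hu₁, mul_one, Real.norm_of_nonneg hγ.le]

namespace IsStarBody

lemma gauge_eq_inv_radialFn (hK : IsStarBody K) (hu : u ∈ sphere 0 1) :
    gauge K u = (radialFn K u)⁻¹ := by
  have hρ : 0 < radialFn K u := hK.2.2.2.1 u hu
  set S := {t : ℝ | 0 < t ∧ t • u ∈ K}
  have hbdd : BddAbove S :=
    bddAbove_radialSet hK.1.isBounded (ne_zero_of_mem_unit_sphere ⟨u, hu⟩)
  -- `radialFn K u > 0` rules out `S = ∅`, where `sSup ∅ = 0`.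
  have hne : S.Nonempty := by
    by_contra hS
    rw [not_nonempty_iff_eq_empty] at hS
    rw [show radialFn K u = sSup S from rfl, hS, Real.sSup_empty] at hρ
    exact hρ.false
  have hmem : ∀ r : ℝ, 0 < r → (u ∈ r • K ↔ r⁻¹ ∈ S) := fun r hr => by
    rw [mem_smul_set_iff_inv_smul_mem₀ hr.ne']
    exact ⟨fun h => ⟨inv_pos.2 hr, h⟩, And.right⟩
  refine csInf_eq_of_forall_ge_of_forall_gt_exists_lt ?_ ?_ ?_
  · obtain ⟨t, ht⟩ := hne
    exact ⟨t⁻¹, inv_pos.2 ht.1, (hmem _ (inv_pos.2 ht.1)).2 (by rwa [inv_inv])⟩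
  · rintro r ⟨hr, hru⟩
    exact inv_le_of_inv_le₀ hr (le_csSup hbdd ((hmem r hr).1 hru))
  · intro w hw
    have hw₀ : 0 < w := (inv_pos.2 hρ).trans hw
    obtain ⟨t, ht, hwt⟩ := exists_lt_of_lt_csSup hne (inv_lt_of_inv_lt₀ hρ hw)
    refine ⟨t⁻¹, ⟨inv_pos.2 ht.1, (hmem _ (inv_pos.2 ht.1)).2 (by rwa [inv_inv])⟩,
      inv_lt_of_inv_lt₀ hw₀ hwt⟩

lemma continuous_gauge (hK : IsStarBody K) : Continuous (gauge K) :=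
  continuous_gauge_of_continuousOn_sphere (mem_interior_iff_mem_nhds.1 hK.2.1) <|
    (hK.2.2.2.2.inv₀ fun u hu => (hK.2.2.2.1 u hu).ne').congr fun _ hu =>
      hK.gauge_eq_inv_radialFn hu

lemma abs_radialFn_sub_le_radialDist (hK : IsStarBody K) (hL : IsStarBody L)
    (hu : u ∈ sphere 0 1) : |radialFn K u - radialFn L u| ≤ radialDist K L := by
  have hcont : ContinuousOn (fun v => |radialFn K v - radialFn L v|) (sphere (0 : Euc d) 1) :=
    (hK.2.2.2.2.sub hL.2.2.2.2).abs
  have hbdd := (isCompact_sphere (0 : Euc d) 1).bddAbove_image hcont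
  rw [image_eq_range] at hbdd
  exact le_ciSup hbdd ⟨u, hu⟩

lemma abs_gauge_sub_gauge_le (hK : IsStarBody K) (hL : IsStarBody L) {γ : ℝ} (hγ : 0 < γ)
    (hKγ : closedBall 0 γ ⊆ K) (hLγ : closedBall 0 γ ⊆ L) (x : Euc d) :
    |gauge K x - gauge L x| ≤ radialDist K L / γ ^ 2 * ‖x‖ := by
  rcases eq_or_ne x 0 with rfl | hx
  · simp [gauge_zero]
  have hu : ‖x‖⁻¹ • x ∈ sphere (0 : Euc d) 1 := by
    simpa using norm_smul_inv_norm (𝕜 := ℝ) hx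
  rw [gauge_eq_norm_mul_gauge_inv_norm_smul (s := K),
    gauge_eq_norm_mul_gauge_inv_norm_smul (s := L), ← mul_sub, abs_mul, abs_norm, mul_comm,
    hK.gauge_eq_inv_radialFn hu, hL.gauge_eq_inv_radialFn hu]
  gcongr
  calc _ ≤ |radialFn K (‖x‖⁻¹ • x) - radialFn L (‖x‖⁻¹ • x)| / γ ^ 2 :=
        abs_inv_sub_inv_le_of_le hγ (le_radialFn_of_closedBall_subset hK.1.isBounded hγ hKγ hu)
          (le_radialFn_of_closedBall_subset hL.1.isBounded hγ hLγ hu)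
    _ ≤ radialDist K L / γ ^ 2 := by gcongr; exact hK.abs_radialFn_sub_le_radialDist hL hu

end IsStarBody

end Radial

theorem lipschitz_of_Fobj_general {d : ℕ} (γ : ℝ) (hγ : 0 < γ)
    (μ ν : Measure (Euc d))
    (hμ : Integrable (fun x => ‖x‖) μ) (hν : Integrable (fun x => ‖x‖) ν)
    (K L : Set (Euc d)) (hK : IsStarBody K) (hL : IsStarBody L)
    (hKγ : closedBall (0 : Euc d) γ ⊆ starKernel K)
    (hLγ : closedBall (0 : Euc d) γ ⊆ starKernel L) :
    |Fobj K μ ν - Fobj L μ ν| ≤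
      (((∫ x, ‖x‖ ∂μ) + (∫ x, ‖x‖ ∂ν)) / γ ^ 2) * radialDist K L := by
  have hKγ' : closedBall (0 : Euc d) γ ⊆ K := fun x hx => (hKγ hx).1
  have hLγ' : closedBall (0 : Euc d) γ ⊆ L := fun x hx => (hLγ hx).1
  set C := radialDist K L / γ ^ 2
  have hexpect : ∀ ρ : Measure (Euc d), Integrable (fun x => ‖x‖) ρ →
      |∫ x, gauge K x ∂ρ - ∫ x, gauge L x ∂ρ| ≤ C * ∫ x, ‖x‖ ∂ρ := by
    intro ρ hρ
    rw [← integral_const_mul]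
    exact abs_integral_sub_integral_le
      (integrable_gauge_of_closedBall_subset hγ hKγ' hK.continuous_gauge hρ)
      (integrable_gauge_of_closedBall_subset hγ hLγ' hL.continuous_gauge hρ)
      (hρ.const_mul C) (hK.abs_gauge_sub_gauge_le hL hγ hKγ' hLγ')
  calc |Fobj K μ ν - Fobj L μ ν|
      = |(∫ x, gauge K x ∂μ - ∫ x, gauge L x ∂μ) -
          (∫ x, gauge K x ∂ν - ∫ x, gauge L x ∂ν)| := by
        rw [Fobj, Fobj]; ring_nf
    _ ≤ C * ∫ x, ‖x‖ ∂μ + C * ∫ x, ‖x‖ ∂ν :=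
        (abs_sub _ _).trans (add_le_add (hexpect μ hμ) (hexpect ν hν))
    _ = (((∫ x, ‖x‖ ∂μ) + (∫ x, ‖x‖ ∂ν)) / γ ^ 2) * radialDist K L := by ring

/-- Lipschitz estimate for the adversarial objective with respect to the
radial metric, over well-conditioned star bodies in `S^d(γ)`. -/
theorem lipschitz_of_Fobj {d : ℕ} (hd : 1 ≤ d) (γ : ℝ) (hγ : 0 < γ)
    (μ ν : Measure (Euc d)) [IsProbabilityMeasure μ] [IsProbabilityMeasure ν]
    (hμ : Integrable (fun x => ‖x‖) μ) (hν : Integrable (fun x => ‖x‖) ν)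
    (K L : Set (Euc d)) (hK : IsStarBody K) (hL : IsStarBody L)
    (hKγ : closedBall (0 : Euc d) γ ⊆ starKernel K)
    (hLγ : closedBall (0 : Euc d) γ ⊆ starKernel L) :
    |Fobj K μ ν - Fobj L μ ν| ≤
      (((∫ x, ‖x‖ ∂μ) + (∫ x, ‖x‖ ∂ν)) / γ ^ 2) * radialDist K L :=
  lipschitz_of_Fobj_general γ hγ μ ν hμ hν K L hK hL hKγ hLγ
end
end

section
/- Let d ≥ 1, γ > 0, and let D_r and D_n be Borel probability measures on ℝ^d with E_{D_r}[‖x‖₂] < ∞ and E_{D_n}[‖x‖₂] < ∞. Assume the class S^d(γ,1) of star bodies K with γ·B^d ⊆ ker(K) and vol_d(K) = 1 is nonempty. Then F(·; D_r, D_n) attains its minimum over S^d(γ,1): there exists K* ∈ S^d(γ,1) such that F(K*; D_r, D_n) ≤ F(K; D_r, D_n) for every K ∈ S^d(γ,1). -/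
open MeasureTheory Metric Set Filter Pointwise

noncomputable section

/-!
Parametrise a body `K` by the restriction of its gauge to the unit sphere. The kernel condition
`γ • B ⊆ ker K` makes the gauge `γ⁻¹`-Lipschitz, and together with `vol K = 1` it bounds the outer
radius uniformly (along every radius `K` contains many disjoint balls of radius `γ / 2`), so the
gauge is at least `c ‖x‖` for a fixed `c > 0`. By Arzelà–Ascoli the resulting set of functions is
compact in the sup norm; it is closed because sup-close gauges have bodies nested up to a factor
`1 + δ / c`, which makes the volume continuous. The objective is Lipschitz in the sup norm, since
`|‖x‖_K - ‖x‖_L| ≤ ‖x‖ · sup_{S^{d-1}} |‖·‖_K - ‖·‖_L|`, so it attains its minimum.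
-/

open BoundedContinuousFunction Topology

section Gauge

variable {E : Type*} [NormedAddCommGroup E] [NormedSpace ℝ E] {K : Set E} {γ : ℝ}

theorem absorbent_of_closedBall_subset (hγ : 0 < γ) (hball : closedBall (0 : E) γ ⊆ K) :
    Absorbent ℝ K :=
  (absorbent_ball_zero hγ).mono (ball_subset_closedBall.trans hball)

theorem mem_of_gauge_lt_one (h₀ : StarConvex ℝ 0 K) (hK : Absorbent ℝ K) {x : E}
    (hx : gauge K x < 1) : x ∈ K := by
  by_contra h
  exact (one_le_gauge_of_notMem h₀ hK.absorbs h).not_gt hx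

theorem gauge_le_one_iff_mem (hK : IsClosed K) (h₀ : StarConvex ℝ 0 K) (habs : Absorbent ℝ K)
    {x : E} : gauge K x ≤ 1 ↔ x ∈ K := by
  refine ⟨fun hx => ?_, gauge_le_one_of_mem⟩
  have hmem : ∀ t ∈ Ioi (1 : ℝ), t⁻¹ • x ∈ K := fun t ht => by
    have ht₀ : 0 < t := zero_lt_one.trans ht
    refine mem_of_gauge_lt_one h₀ habs ?_
    rw [gauge_smul_of_nonneg (inv_nonneg.2 ht₀.le), smul_eq_mul, inv_mul_lt_one₀ ht₀]
    exact hx.trans_lt ht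
  have hlim : Tendsto (fun t : ℝ => t⁻¹ • x) (𝓝[>] 1) (𝓝 x) := by
    simpa using ((tendsto_inv₀ (one_ne_zero' ℝ)).smul_const x).mono_left nhdsWithin_le_nhds
  exact hK.mem_of_tendsto hlim (eventually_nhdsWithin_of_forall hmem)

variable (hγ : 0 < γ) (hball : closedBall (0 : E) γ ⊆ K)
  (hker : ∀ z ∈ closedBall (0 : E) γ, StarConvex ℝ z K)
include hγ hball hker

/-- For `s > gauge K y` and `l > γ⁻¹ ‖x - y‖`, the point `x / (s + l)` is a convex combination of
`y / s ∈ K` and `(x - y) / l`, which lies in the kernel ball; hence `x ∈ (s + l) • K`. -/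
theorem gauge_le_gauge_add_inv_mul_norm (x y : E) : gauge K x ≤ gauge K y + γ⁻¹ * ‖x - y‖ := by
  have habs := absorbent_of_closedBall_subset hγ hball
  refine le_of_forall_pos_le_add fun ε hε => ?_
  set s := gauge K y + ε / 2 with hs_def
  set l := γ⁻¹ * ‖x - y‖ + ε / 2 with hl_def
  have hs : 0 < s := add_pos_of_nonneg_of_pos (gauge_nonneg _) (half_pos hε)
  have hl : 0 < l := add_pos_of_nonneg_of_pos (by positivity) (half_pos hε)
  have hy : s⁻¹ • y ∈ K := by
    refine mem_of_gauge_lt_one (hker 0 (mem_closedBall_self hγ.le)) habs ?_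
    rw [gauge_smul_of_nonneg (inv_nonneg.2 hs.le), smul_eq_mul, inv_mul_lt_one₀ hs]
    linarith
  have hw : l⁻¹ • (x - y) ∈ closedBall (0 : E) γ := by
    rw [mem_closedBall_zero_iff, norm_smul, Real.norm_of_nonneg (inv_nonneg.2 hl.le),
      inv_mul_le_iff₀ hl, hl_def, add_mul, mul_right_comm, inv_mul_cancel₀ hγ.ne', one_mul]
    have : 0 < ε / 2 * γ := by positivity
    linarith
  have hx : (s + l)⁻¹ • x ∈ K := by
    convert (hker _ hw).add_smul_sub_mem hy (t := s / (s + l)) (by positivity)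
      (div_le_one_of_le₀ (by linarith) (by positivity)) using 1
    match_scalars <;> field_simp <;> ring
  calc gauge K x ≤ s + l :=
        gauge_le_of_mem (by positivity) ((mem_smul_set_iff_inv_smul_mem₀ (by positivity) _ _).2 hx)
    _ = gauge K y + γ⁻¹ * ‖x - y‖ + ε := by ring

theorem lipschitzWith_gauge_of_closedBall_subset :
    LipschitzWith (Real.toNNReal γ⁻¹) (gauge K) :=
  LipschitzWith.of_le_add_mul' _ fun x y => by
    simpa [dist_eq_norm] using gauge_le_gauge_add_inv_mul_norm hγ hball hker x y

end Gauge

section OuterRadius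

variable {E : Type*} [NormedAddCommGroup E] [NormedSpace ℝ E] {K : Set E} {γ : ℝ}

theorem ball_smul_subset_of_mem (hker : ∀ z ∈ closedBall (0 : E) γ, StarConvex ℝ z K) {x : E}
    (hx : x ∈ K) {t : ℝ} (ht₀ : 0 ≤ t) (ht : t ≤ 1 / 2) : ball (t • x) (γ / 2) ⊆ K := by
  intro p hp
  have ht₁ : 0 < 1 - t := by linarith
  set z := (1 - t)⁻¹ • (p - t • x) with hz_def
  have hz : z ∈ closedBall (0 : E) γ := by
    rw [mem_ball, dist_eq_norm] at hp
    rw [mem_closedBall_zero_iff, hz_def, norm_smul, Real.norm_of_nonneg (inv_nonneg.2 ht₁.le),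
      inv_mul_le_iff₀ ht₁]
    nlinarith [norm_nonneg (p - t • x)]
  have hp_eq : p = z + t • (x - z) := by
    have : (1 - t) • z = p - t • x := by rw [hz_def, smul_smul, mul_inv_cancel₀ ht₁.ne', one_smul]
    calc p = (1 - t) • z + t • x := by rw [this, sub_add_cancel]
      _ = z + t • (x - z) := by module
  rw [hp_eq]
  exact (hker z hz).add_smul_sub_mem hx ht₀ (by linarith)

variable [MeasurableSpace E] (μ : Measure E) [μ.IsAddHaarMeasure]

/-- Along the segment `[0, x/2]` the set contains `⌊‖x‖ / 2γ⌋ + 1` pairwise disjoint balls of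
radius `γ / 2`. -/
theorem ofReal_norm_div_mul_measure_ball_le [BorelSpace E]
    (hker : ∀ z ∈ closedBall (0 : E) γ, StarConvex ℝ z K) {x : E} (hx : x ∈ K) :
    ENNReal.ofReal (‖x‖ / (2 * γ)) * μ (ball 0 (γ / 2)) ≤ μ K := by
  rcases le_or_gt γ 0 with hγ | hγ
  · simp [ball_eq_empty.2 (by linarith : γ / 2 ≤ 0)]
  rcases eq_or_ne x 0 with rfl | hx₀
  · simp
  have hnx : 0 < ‖x‖ := norm_pos_iff.2 hx₀
  set N := ⌊‖x‖ / (2 * γ)⌋₊ + 1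
  set B : ℕ → Set E := fun k => ball ((k * γ / ‖x‖) • x) (γ / 2)
  have hB : ∀ k ∈ Finset.range N, B k ⊆ K := by
    intro k hk
    have hk : (k : ℝ) ≤ ‖x‖ / (2 * γ) :=
      (Nat.cast_le.2 (Nat.lt_succ_iff.1 (Finset.mem_range.1 hk))).trans
        (Nat.floor_le (by positivity))
    refine ball_smul_subset_of_mem hker hx (by positivity) ?_
    rw [le_div_iff₀ (by positivity)] at hk
    rw [div_le_iff₀ hnx]
    linarith
  have hdisj : (Finset.range N : Set ℕ).PairwiseDisjoint B := by
    intro j _ k _ hjk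
    apply ball_disjoint_ball
    have hjk' : 1 ≤ |(j : ℝ) - k| := by
      rw [le_abs]
      rcases lt_or_gt_of_ne hjk with h | h
      · have : (j : ℝ) + 1 ≤ k := by exact_mod_cast h
        right; linarith
      · have : (k : ℝ) + 1 ≤ j := by exact_mod_cast h
        left; linarith
    rw [dist_eq_norm, ← sub_smul, norm_smul, Real.norm_eq_abs, ← sub_div, ← sub_mul, abs_div,
      abs_mul, abs_of_pos hγ, abs_of_pos hnx, div_mul_cancel₀ _ hnx.ne']
    nlinarith
  calc ENNReal.ofReal (‖x‖ / (2 * γ)) * μ (ball 0 (γ / 2))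
      ≤ N * μ (ball 0 (γ / 2)) := by
        gcongr
        rw [← ENNReal.ofReal_natCast]
        exact ENNReal.ofReal_le_ofReal (by exact_mod_cast (Nat.lt_floor_add_one _).le)
    _ = ∑ k ∈ Finset.range N, μ (B k) := by simp [B, Measure.addHaar_ball_center]
    _ = μ (⋃ k ∈ Finset.range N, B k) :=
        (measure_biUnion_finset hdisj fun _ _ => measurableSet_ball).symm
    _ ≤ μ K := measure_mono (iUnion₂_subset hB)

theorem measureReal_ball_pos [FiniteDimensional ℝ E] {r : ℝ} (hr : 0 < r) :
    0 < μ.real (ball (0 : E) r) :=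
  ENNReal.toReal_pos (measure_ball_pos μ 0 hr).ne' measure_ball_lt_top.ne

theorem mul_norm_le_gauge_of_measure_eq_one [FiniteDimensional ℝ E] [BorelSpace E] (hγ : 0 < γ)
    (hball : closedBall (0 : E) γ ⊆ K)
    (hker : ∀ z ∈ closedBall (0 : E) γ, StarConvex ℝ z K) (hK : μ K = 1) (x : E) :
    μ.real (ball 0 (γ / 2)) / (2 * γ) * ‖x‖ ≤ gauge K x := by
  set m := μ.real (ball (0 : E) (γ / 2))
  have hm : 0 < m := measureReal_ball_pos μ (by positivity)
  have hsub : K ⊆ closedBall 0 (2 * γ / m) := fun y hy => by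
    have h := ENNReal.toReal_mono ENNReal.one_ne_top
      ((ofReal_norm_div_mul_measure_ball_le μ hker hy).trans hK.le)
    rw [ENNReal.toReal_mul, ENNReal.toReal_ofReal (by positivity), ENNReal.toReal_one,
      ← measureReal_def] at h
    rw [mem_closedBall_zero_iff, le_div_iff₀ hm]
    rw [div_mul_eq_mul_div, div_le_one (by positivity)] at h
    exact h
  calc m / (2 * γ) * ‖x‖ = ‖x‖ / (2 * γ / m) := by field_simp
    _ ≤ gauge K x := le_gauge_of_subset_closedBall (absorbent_of_closedBall_subset hγ hball)
        (by positivity) hsub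

end OuterRadius

section HomogeneousSublevel

variable {E : Type*} [NormedAddCommGroup E] [NormedSpace ℝ E] {g : E → ℝ}

theorem mem_smul_setOf_le_one_iff (hg : ∀ t : ℝ, 0 ≤ t → ∀ x, g (t • x) = t * g x) {t : ℝ}
    (ht : 0 < t) {x : E} : x ∈ t • {y | g y ≤ 1} ↔ g x ≤ t := by
  rw [mem_smul_set_iff_inv_smul_mem₀ ht.ne', mem_ofPred_eq, hg _ (inv_nonneg.2 ht.le),
    inv_mul_le_one₀ ht]

theorem gauge_setOf_le_one (hg : ∀ t : ℝ, 0 ≤ t → ∀ x, g (t • x) = t * g x)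
    (hg₀ : ∀ x, 0 ≤ g x) : gauge {y | g y ≤ 1} = g := by
  funext x
  have hmem : ∀ t > 0, x ∈ t • {y | g y ≤ 1} ↔ g x ≤ t := fun t ht =>
    mem_smul_setOf_le_one_iff hg ht
  refine le_antisymm (le_of_forall_pos_le_add fun ε hε => ?_) ?_
  · have hpos : 0 < g x + ε := add_pos_of_nonneg_of_pos (hg₀ x) hε
    exact gauge_le_of_mem hpos.le ((hmem _ hpos).2 (le_add_of_nonneg_right hε.le))
  · have hpos : 0 < g x + 1 := add_pos_of_nonneg_of_pos (hg₀ x) one_pos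
    rw [gauge_def]
    exact le_csInf ⟨g x + 1, hpos, (hmem _ hpos).2 (by linarith)⟩
      fun t ⟨ht, hx⟩ => (hmem t ht).1 hx

end HomogeneousSublevel

section HomogeneousExtension

variable {E : Type*} [NormedAddCommGroup E] [NormedSpace ℝ E]

theorem inv_norm_smul_mem_sphere {x : E} (hx : x ≠ 0) : ‖x‖⁻¹ • x ∈ sphere (0 : E) 1 := by
  rw [mem_sphere_zero_iff_norm]
  exact norm_smul_inv_norm (𝕜 := ℝ) hx

open Classical in
def homExt (f : sphere (0 : E) 1 →ᵇ ℝ) (x : E) : ℝ :=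
  if hx : x = 0 then 0 else ‖x‖ * f ⟨‖x‖⁻¹ • x, inv_norm_smul_mem_sphere hx⟩

variable (f g : sphere (0 : E) 1 →ᵇ ℝ)

@[simp]
theorem homExt_zero : homExt f 0 = 0 := by simp [homExt]

theorem homExt_of_ne_zero {x : E} (hx : x ≠ 0) :
    homExt f x = ‖x‖ * f ⟨‖x‖⁻¹ • x, inv_norm_smul_mem_sphere hx⟩ := by
  rw [homExt, dif_neg hx]

@[simp]
theorem homExt_coe (u : sphere (0 : E) 1) : homExt f u = f u := by
  have hu : ‖(u : E)‖ = 1 := mem_sphere_zero_iff_norm.1 u.2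
  rw [homExt_of_ne_zero f (ne_zero_of_mem_unit_sphere u)]
  simp only [hu, inv_one, one_smul, one_mul, Subtype.coe_eta]

theorem homExt_smul {t : ℝ} (ht : 0 ≤ t) (x : E) : homExt f (t • x) = t * homExt f x := by
  rcases ht.eq_or_lt with rfl | ht
  · simp
  rcases eq_or_ne x 0 with rfl | hx
  · simp
  have htx : t • x ≠ 0 := smul_ne_zero ht.ne' hx
  have hn : ‖t • x‖ = t * ‖x‖ := by rw [norm_smul, Real.norm_of_nonneg ht.le]
  rw [homExt_of_ne_zero f htx, homExt_of_ne_zero f hx, ← mul_assoc, ← hn]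
  congr 3
  rw [hn, smul_smul, mul_inv_rev, mul_assoc, inv_mul_cancel₀ ht.ne', mul_one]

theorem abs_homExt_sub_homExt_le (x : E) : |homExt f x - homExt g x| ≤ dist f g * ‖x‖ := by
  rcases eq_or_ne x 0 with rfl | hx
  · simp
  rw [homExt_of_ne_zero f hx, homExt_of_ne_zero g hx, ← mul_sub, abs_mul, abs_norm, mul_comm]
  gcongr
  rw [← Real.dist_eq]
  exact dist_coe_le_dist _

theorem abs_homExt_le (x : E) : |homExt f x| ≤ ‖f‖ * ‖x‖ := by
  simpa [homExt, dist_zero_right] using abs_homExt_sub_homExt_le f 0 x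

theorem homExt_eq_gauge {K : Set E} (hf : ∀ u, f u = gauge K u) : homExt f = gauge K := by
  funext x
  rcases eq_or_ne x 0 with rfl | hx
  · simp
  rw [homExt_of_ne_zero f hx, hf, gauge_smul_of_nonneg (inv_nonneg.2 (norm_nonneg x)),
    smul_eq_mul, ← mul_assoc, mul_inv_cancel₀ (norm_ne_zero_iff.2 hx), one_mul]

end HomogeneousExtension

section Admissible

variable {E : Type*} [NormedAddCommGroup E] [NormedSpace ℝ E] {γ c : ℝ}
  {f g : sphere (0 : E) 1 →ᵇ ℝ}

/-- Restrictions to the unit sphere of the gauges of bodies with `γ • B` in their kernel and outer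
radius at most `c⁻¹`, described intrinsically. -/
def admissible (γ c : ℝ) : Set (sphere (0 : E) 1 →ᵇ ℝ) :=
  {f | (∀ u, c ≤ f u) ∧ ∀ x y, homExt f x ≤ homExt f y + γ⁻¹ * ‖x - y‖}

def bodyOf (f : sphere (0 : E) 1 →ᵇ ℝ) : Set E := {x | homExt f x ≤ 1}

theorem lipschitzWith_homExt (hf : f ∈ admissible γ c) :
    LipschitzWith (Real.toNNReal γ⁻¹) (homExt f) :=
  LipschitzWith.of_le_add_mul' _ fun x y => by simpa [dist_eq_norm] using hf.2 x y

theorem homExt_le_inv_mul_norm (hf : f ∈ admissible γ c) (x : E) : homExt f x ≤ γ⁻¹ * ‖x‖ := by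
  simpa using hf.2 x 0

theorem mul_norm_le_homExt (hf : f ∈ admissible γ c) (x : E) : c * ‖x‖ ≤ homExt f x := by
  rcases eq_or_ne x 0 with rfl | hx
  · simp
  rw [homExt_of_ne_zero f hx, mul_comm c]
  exact mul_le_mul_of_nonneg_left (hf.1 _) (norm_nonneg x)

theorem gauge_bodyOf (hc : 0 ≤ c) (hf : f ∈ admissible γ c) : gauge (bodyOf f) = homExt f :=
  gauge_setOf_le_one (fun _ ht => homExt_smul f ht) fun x =>
    (mul_nonneg hc (norm_nonneg x)).trans (mul_norm_le_homExt hf x)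

theorem closedBall_subset_bodyOf (hγ : 0 < γ) (hf : f ∈ admissible γ c) :
    closedBall (0 : E) γ ⊆ bodyOf f := fun x hx =>
  calc homExt f x ≤ γ⁻¹ * ‖x‖ := homExt_le_inv_mul_norm hf x
    _ ≤ γ⁻¹ * γ := by gcongr; exact mem_closedBall_zero_iff.1 hx
    _ = 1 := inv_mul_cancel₀ hγ.ne'

theorem starConvex_bodyOf (hγ : 0 < γ) (hf : f ∈ admissible γ c) {z : E}
    (hz : z ∈ closedBall (0 : E) γ) : StarConvex ℝ z (bodyOf f) := by
  intro y hy a b ha hb hab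
  have hz' : γ⁻¹ * ‖a • z‖ ≤ a := by
    rw [norm_smul, Real.norm_of_nonneg ha, mul_left_comm]
    refine mul_le_of_le_one_right ha ?_
    rw [inv_mul_le_one₀ hγ]
    exact mem_closedBall_zero_iff.1 hz
  calc homExt f (a • z + b • y) ≤ homExt f (b • y) + γ⁻¹ * ‖a • z‖ := by
        simpa using hf.2 (a • z + b • y) (b • y)
    _ ≤ b * 1 + a := by rw [homExt_smul f hb]; gcongr; exact hy
    _ = 1 := by linarith

theorem bodyOf_subset_closedBall (hc : 0 < c) (hf : f ∈ admissible γ c) :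
    bodyOf f ⊆ closedBall (0 : E) c⁻¹ := fun x hx => by
  rw [mem_closedBall_zero_iff, ← one_div, le_div_iff₀ hc, mul_comm]
  exact (mul_norm_le_homExt hf x).trans hx

theorem isCompact_bodyOf [ProperSpace E] (hc : 0 < c) (hf : f ∈ admissible γ c) :
    IsCompact (bodyOf f) :=
  (isCompact_closedBall 0 c⁻¹).of_isClosed_subset
    (isClosed_le (lipschitzWith_homExt hf).continuous continuous_const)
    (bodyOf_subset_closedBall hc hf)

theorem bodyOf_subset_smul_bodyOf (hc : 0 < c) (hf : f ∈ admissible γ c) :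
    bodyOf f ⊆ (1 + dist f g / c) • bodyOf g := fun x hx => by
  have hδ : 0 < 1 + dist f g / c := by positivity
  rw [bodyOf, mem_smul_setOf_le_one_iff (fun _ ht => homExt_smul g ht) hδ]
  have hx' : ‖x‖ ≤ c⁻¹ := mem_closedBall_zero_iff.1 (bodyOf_subset_closedBall hc hf hx)
  calc homExt g x ≤ homExt f x + dist f g * ‖x‖ := by
        linarith [abs_le.1 (abs_homExt_sub_homExt_le f g x)]
    _ ≤ 1 + dist f g * c⁻¹ := by gcongr; exact hx
    _ = 1 + dist f g / c := by rw [div_eq_mul_inv]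

theorem isClosed_admissible : IsClosed (admissible (E := E) γ c) := by
  have hcont : ∀ x : E, Continuous fun f : sphere (0 : E) 1 →ᵇ ℝ => homExt f x := fun x =>
    LipschitzWith.continuous (K := Real.toNNReal ‖x‖) <| LipschitzWith.of_le_add_mul' _
      fun f g => by linarith [abs_le.1 (abs_homExt_sub_homExt_le f g x)]
  simp only [admissible, ofPred_and, ofPred_forall]
  exact (isClosed_iInter fun u => isClosed_le continuous_const (continuous_eval_const u)).inter
    (isClosed_iInter fun x => isClosed_iInter fun y =>
      isClosed_le (hcont x) ((hcont y).add continuous_const))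

theorem isCompact_admissible [ProperSpace E] : IsCompact (admissible (E := E) γ c) := by
  refine arzela_ascoli₂ (Icc c γ⁻¹) isCompact_Icc _ isClosed_admissible
    (fun f u hf => ⟨hf.1 u, by simpa using homExt_le_inv_mul_norm hf u⟩) ?_
  refine (LipschitzWith.uniformEquicontinuous _ (Real.toNNReal γ⁻¹ * 1) fun f => ?_).equicontinuous
  convert (lipschitzWith_homExt f.2).comp (LipschitzWith.subtype_val _) using 1
  funext u
  exact (homExt_coe _ u).symm

end Admissible

section Volume

variable {E : Type*} [NormedAddCommGroup E] [NormedSpace ℝ E] [FiniteDimensional ℝ E]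
  [MeasurableSpace E] [BorelSpace E] (μ : Measure E) [μ.IsAddHaarMeasure] {γ c : ℝ}

theorem measure_bodyOf_le (hc : 0 < c) {f g : sphere (0 : E) 1 →ᵇ ℝ} (hf : f ∈ admissible γ c) :
    μ (bodyOf f) ≤ ENNReal.ofReal ((1 + dist f g / c) ^ Module.finrank ℝ E) * μ (bodyOf g) :=
  calc μ (bodyOf f) ≤ μ ((1 + dist f g / c) • bodyOf g) :=
        measure_mono (bodyOf_subset_smul_bodyOf hc hf)
    _ = _ := by rw [Measure.addHaar_smul, abs_of_nonneg (by positivity)]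

theorem isClosed_admissible_inter_measure_eq_one (hc : 0 < c) :
    IsClosed (admissible γ c ∩ {f | μ (bodyOf f) = 1}) := by
  refine IsSeqClosed.isClosed fun g f hg hgf => ?_
  have hf : f ∈ admissible γ c :=
    isClosed_admissible.mem_of_tendsto hgf (Eventually.of_forall fun n => (hg n).1)
  set a : ℕ → ENNReal := fun n => ENNReal.ofReal ((1 + dist (g n) f / c) ^ Module.finrank ℝ E)
  have ha : Tendsto a atTop (𝓝 1) := by
    have hφ : Continuous fun t : ℝ => ENNReal.ofReal ((1 + t / c) ^ Module.finrank ℝ E) :=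
      ENNReal.continuous_ofReal.comp (by fun_prop)
    simpa [a, Function.comp_def] using (hφ.tendsto 0).comp (tendsto_iff_dist_tendsto_zero.1 hgf)
  have hvol : ∀ n, μ (bodyOf (g n)) = 1 := fun n => (hg n).2
  have hle : ∀ n, μ (bodyOf f) ≤ a n := fun n => by
    simpa [a, hvol n, dist_comm] using measure_bodyOf_le μ hc (g := g n) hf
  have hge : ∀ n, 1 ≤ a n * μ (bodyOf f) := fun n => by
    simpa [a, hvol n] using measure_bodyOf_le μ hc (g := f) (hg n).1
  refine ⟨hf, le_antisymm (ge_of_tendsto' ha hle) ?_⟩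
  simpa using ge_of_tendsto' (ENNReal.Tendsto.mul_const ha (.inl one_ne_zero)) hge

end Volume

section Integral

variable {E : Type*} [NormedAddCommGroup E] [NormedSpace ℝ E] [MeasurableSpace E]
  [OpensMeasurableSpace E] {μ : Measure E} {γ c : ℝ}

theorem integrable_homExt (hμ : Integrable (fun x => ‖x‖) μ) {f : sphere (0 : E) 1 →ᵇ ℝ}
    (hf : f ∈ admissible γ c) : Integrable (homExt f) μ :=
  (hμ.const_mul ‖f‖).mono' (lipschitzWith_homExt hf).continuous.aestronglyMeasurable
    (ae_of_all _ fun x => by simpa [Real.norm_eq_abs] using abs_homExt_le f x)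

theorem continuousOn_integral_homExt (hμ : Integrable (fun x => ‖x‖) μ) :
    ContinuousOn (fun f => ∫ x, homExt f x ∂μ) (admissible (E := E) γ c) := by
  refine LipschitzOnWith.continuousOn (K := Real.toNNReal (∫ x, ‖x‖ ∂μ)) ?_
  refine lipschitzOnWith_iff_dist_le_mul.2 fun f hf g hg => ?_
  rw [Real.dist_eq, Real.coe_toNNReal _ (integral_nonneg fun _ => norm_nonneg _),
    ← integral_sub (integrable_homExt hμ hf) (integrable_homExt hμ hg)]
  calc |∫ x, homExt f x - homExt g x ∂μ| ≤ ∫ x, |homExt f x - homExt g x| ∂μ :=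
        abs_integral_le_integral_abs
    _ ≤ ∫ x, dist f g * ‖x‖ ∂μ := integral_mono_of_nonneg (ae_of_all _ fun _ => abs_nonneg _)
        (hμ.const_mul _) (ae_of_all _ fun x => abs_homExt_sub_homExt_le f g x)
    _ = (∫ x, ‖x‖ ∂μ) * dist f g := by rw [integral_const_mul, mul_comm]

end Integral

section FromBody

variable {E : Type*} [NormedAddCommGroup E] [NormedSpace ℝ E] {K : Set E} {γ c : ℝ}

theorem exists_mem_admissible_homExt_eq_gauge [ProperSpace E] (hγ : 0 < γ)
    (hball : closedBall (0 : E) γ ⊆ K) (hker : ∀ z ∈ closedBall (0 : E) γ, StarConvex ℝ z K)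
    (hc : ∀ x, c * ‖x‖ ≤ gauge K x) : ∃ f ∈ admissible γ c, homExt f = gauge K := by
  let f : sphere (0 : E) 1 →ᵇ ℝ := mkOfCompact ⟨fun u => gauge K u,
    (lipschitzWith_gauge_of_closedBall_subset hγ hball hker).continuous.comp continuous_subtype_val⟩
  have hfK : homExt f = gauge K := homExt_eq_gauge f fun _ => rfl
  refine ⟨f, ⟨fun u => ?_, fun x y => ?_⟩, hfK⟩
  · show c ≤ gauge K u
    simpa [mem_sphere_zero_iff_norm.1 u.2] using hc u
  · rw [hfK]
    exact gauge_le_gauge_add_inv_mul_norm hγ hball hker x y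

theorem exists_mem_admissible_bodyOf_eq [FiniteDimensional ℝ E] [MeasurableSpace E]
    [BorelSpace E] (μ : Measure E) [μ.IsAddHaarMeasure] (hγ : 0 < γ) (hK : IsClosed K)
    (hball : closedBall (0 : E) γ ⊆ K) (hker : ∀ z ∈ closedBall (0 : E) γ, StarConvex ℝ z K)
    (hμK : μ K = 1) : ∃ f ∈ admissible γ (μ.real (ball 0 (γ / 2)) / (2 * γ)), bodyOf f = K := by
  obtain ⟨f, hf, hfK⟩ := exists_mem_admissible_homExt_eq_gauge hγ hball hker
    (mul_norm_le_gauge_of_measure_eq_one μ hγ hball hker hμK)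
  refine ⟨f, hf, Set.ext fun x => ?_⟩
  rw [bodyOf, mem_ofPred_eq, hfK, gauge_le_one_iff_mem hK (hker 0 (mem_closedBall_self hγ.le))
    (absorbent_of_closedBall_subset hγ hball)]

end FromBody

section StarBody

variable {d : ℕ} {K : Set (Euc d)} {γ c : ℝ}

theorem subset_starKernel_iff {s : Set (Euc d)} :
    s ⊆ starKernel K ↔ s ⊆ K ∧ ∀ z ∈ s, StarConvex ℝ z K := by
  simp only [starKernel, starConvex_iff_segment_subset]
  exact ⟨fun h => ⟨fun z hz => (h hz).1, fun z hz => (h hz).2⟩,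
    fun h z hz => ⟨h.1 hz, h.2 z hz⟩⟩

theorem radialFn_eq_inv_gauge (hK : IsClosed K) (h₀ : StarConvex ℝ 0 K) (habs : Absorbent ℝ K)
    {x : Euc d} (hx : 0 < gauge K x) : radialFn K x = (gauge K x)⁻¹ := by
  have hset : {t : ℝ | 0 < t ∧ t • x ∈ K} = Ioc 0 (gauge K x)⁻¹ := by
    ext t
    refine and_congr_right fun ht => ?_
    rw [← gauge_le_one_iff_mem hK h₀ habs, gauge_smul_of_nonneg ht.le, smul_eq_mul,
      ← one_div, le_div_iff₀ hx]
  rw [radialFn, hset, csSup_Ioc (inv_pos.2 hx)]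

theorem isStarBody_of_closedBall_subset_starKernel (hK : IsCompact K) (hγ : 0 < γ)
    (hker : closedBall 0 γ ⊆ starKernel K) : IsStarBody K := by
  obtain ⟨hball, hstar⟩ := subset_starKernel_iff.1 hker
  have h₀ := hstar 0 (mem_closedBall_self hγ.le)
  have habs := absorbent_of_closedBall_subset hγ hball
  have hpos : ∀ u ∈ sphere (0 : Euc d) 1, 0 < gauge K u := fun u hu =>
    (gauge_pos habs ((NormedSpace.isVonNBounded_iff ℝ).2 hK.isBounded)).2
      (ne_zero_of_mem_unit_sphere ⟨u, hu⟩)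
  have hcont : ContinuousOn (fun x => (gauge K x)⁻¹) (sphere (0 : Euc d) 1) :=
    (lipschitzWith_gauge_of_closedBall_subset hγ hball hstar).continuous.continuousOn.inv₀
      fun u hu => (hpos u hu).ne'
  refine ⟨hK, mem_interior_iff_mem_nhds.2 (mem_of_superset (closedBall_mem_nhds 0 hγ) hball),
    starConvex_iff_segment_subset.1 h₀, fun u hu => ?_, hcont.congr fun u hu => ?_⟩
  · rw [radialFn_eq_inv_gauge hK.isClosed h₀ habs (hpos u hu)]
    exact inv_pos.2 (hpos u hu)
  · exact radialFn_eq_inv_gauge hK.isClosed h₀ habs (hpos u hu)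

theorem closedBall_subset_starKernel_bodyOf (hγ : 0 < γ) {f : sphere (0 : Euc d) 1 →ᵇ ℝ}
    (hf : f ∈ admissible γ c) : closedBall 0 γ ⊆ starKernel (bodyOf f) :=
  subset_starKernel_iff.2 ⟨closedBall_subset_bodyOf hγ hf, fun _ hz => starConvex_bodyOf hγ hf hz⟩

theorem isStarBody_bodyOf (hγ : 0 < γ) (hc : 0 < c) {f : sphere (0 : Euc d) 1 →ᵇ ℝ}
    (hf : f ∈ admissible γ c) : IsStarBody (bodyOf f) :=
  isStarBody_of_closedBall_subset_starKernel (isCompact_bodyOf hc hf) hγ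
    (closedBall_subset_starKernel_bodyOf hγ hf)

theorem Fobj_bodyOf (hc : 0 ≤ c) {f : sphere (0 : Euc d) 1 →ᵇ ℝ} (hf : f ∈ admissible γ c)
    (μ ν : Measure (Euc d)) :
    Fobj (bodyOf f) μ ν = (∫ x, homExt f x ∂μ) - ∫ x, homExt f x ∂ν := by
  rw [Fobj, gauge_bodyOf hc hf]

end StarBody

theorem exists_minimizer_Fobj_general {d : ℕ} (γ : ℝ) (hγ : 0 < γ)
    (μ ν : Measure (Euc d))
    (hμ : Integrable (fun x => ‖x‖) μ) (hν : Integrable (fun x => ‖x‖) ν)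
    (hne : ∃ K : Set (Euc d), IsStarBody K ∧ closedBall (0 : Euc d) γ ⊆ starKernel K ∧
      volume K = 1) :
    ∃ Kstar : Set (Euc d),
      (IsStarBody Kstar ∧ closedBall (0 : Euc d) γ ⊆ starKernel Kstar ∧ volume Kstar = 1) ∧
      ∀ K : Set (Euc d), IsStarBody K → closedBall (0 : Euc d) γ ⊆ starKernel K →
        volume K = 1 → Fobj Kstar μ ν ≤ Fobj K μ ν := by
  set c := volume.real (ball (0 : Euc d) (γ / 2)) / (2 * γ)
  set S := admissible (E := Euc d) γ c ∩ {f | volume (bodyOf f) = 1}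
  have hc : 0 < c := div_pos (measureReal_ball_pos volume (by positivity)) (by positivity)
  have hbody : ∀ K, IsStarBody K → closedBall (0 : Euc d) γ ⊆ starKernel K → volume K = 1 →
      ∃ f ∈ S, bodyOf f = K := fun K hK hker hvol => by
    obtain ⟨hball, hstar⟩ := subset_starKernel_iff.1 hker
    obtain ⟨f, hf, rfl⟩ := exists_mem_admissible_bodyOf_eq volume hγ hK.1.isClosed hball hstar hvol
    exact ⟨f, ⟨hf, hvol⟩, rfl⟩
  obtain ⟨K₀, hK₀, hK₀ker, hK₀vol⟩ := hne
  obtain ⟨f₀, hf₀, -⟩ := hbody K₀ hK₀ hK₀ker hK₀vol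
  have hS : IsCompact S := isCompact_admissible.of_isClosed_subset
    (isClosed_admissible_inter_measure_eq_one volume hc) inter_subset_left
  have hF : ContinuousOn (fun f => Fobj (bodyOf f) μ ν) S :=
    (((continuousOn_integral_homExt hμ).sub (continuousOn_integral_homExt hν)).mono
      inter_subset_left).congr fun f hf => Fobj_bodyOf hc.le hf.1 μ ν
  obtain ⟨f, hfS, hmin⟩ := hS.exists_isMinOn ⟨f₀, hf₀⟩ hF
  refine ⟨bodyOf f, ⟨isStarBody_bodyOf hγ hc hfS.1, closedBall_subset_starKernel_bodyOf hγ hfS.1,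
    hfS.2⟩, fun K hK hker hvol => ?_⟩
  obtain ⟨g, hgS, rfl⟩ := hbody K hK hker hvol
  exact hmin hgS

/-- Existence of minimizers of the adversarial objective over the class
`S^d(γ,1)` of unit-volume star bodies with `γ·B^d` contained in the kernel. -/
theorem exists_minimizer_Fobj {d : ℕ} (hd : 1 ≤ d) (γ : ℝ) (hγ : 0 < γ)
    (μ ν : Measure (Euc d)) [IsProbabilityMeasure μ] [IsProbabilityMeasure ν]
    (hμ : Integrable (fun x => ‖x‖) μ) (hν : Integrable (fun x => ‖x‖) ν)
    (hne : ∃ K : Set (Euc d), IsStarBody K ∧ closedBall (0 : Euc d) γ ⊆ starKernel K ∧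
      volume K = 1) :
    ∃ Kstar : Set (Euc d),
      (IsStarBody Kstar ∧ closedBall (0 : Euc d) γ ⊆ starKernel Kstar ∧ volume Kstar = 1) ∧
      ∀ K : Set (Euc d), IsStarBody K → closedBall (0 : Euc d) γ ⊆ starKernel K →
        volume K = 1 → Fobj Kstar μ ν ≤ Fobj K μ ν :=
  exists_minimizer_Fobj_general γ hγ μ ν hμ hν hne
end
end

section
/- Let d ≥ 2 and let a, b : S^{d-1} → (0,∞) be continuous functions (the radial functions of star bodies L_r and L̃_n). Define λ* := min_{u ∈ S^{d-1}} (1/2) · ( a(u)/b(u) )^{(d−1)/2}; then λ* > 0. For λ ∈ (0, λ*] and each sign choice ±, define ρ_{±,λ}(u) := ( a(u)^d / (2λ · b(u)^{d−1}) ) · ( 1 ± √( 1 − 4λ² (b(u)/a(u))^{d−1} ) ). Then: (i) for every λ ∈ (0, λ*], both ρ_{+,λ} and ρ_{−,λ} are positive continuous functions on S^{d-1} satisfying, for all u ∈ S^{d-1}, ρ(u)^{−1} + ρ(u)·b(u)^{d−1}/a(u)^{d+1} = 1/(λ·a(u)); and (ii) for every λ ∈ (0, λ*), if K is a star body whose radial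 function ρ_K satisfies ρ_K(u)^{−1} + ρ_K(u)·b(u)^{d−1}/a(u)^{d+1} = 1/(λ·a(u)) for all u ∈ S^{d-1}, then ρ_K = ρ_{+,λ} on S^{d-1} or ρ_K = ρ_{−,λ} on S^{d-1}. -/
open MeasureTheory Metric Set Filter Pointwise

noncomputable section

private lemma auxDiscLe (A B lam : ℝ) (hA : 0<A) (hB : 0<B) (hl : 0<lam) (m : ℕ)
    (h : lam ≤ (1/2)*(A/B) ^ (((m:ℝ))/2)) : 4*lam^2*(B/A)^m ≤ 1 := by
  have hAB : (0:ℝ) < A/B := div_pos hA hB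
  have hr : ((A/B) ^ (((m:ℝ))/2))^2 = (A/B)^m := by
    rw [← Real.rpow_natCast ((A/B) ^ (((m:ℝ))/2)) 2, ← Real.rpow_mul hAB.le]
    norm_num [Real.rpow_natCast]
  have hP : (0:ℝ) < (A/B)^m := pow_pos hAB m
  have h2 : 4*lam^2 ≤ (A/B)^m := by nlinarith [Real.rpow_pos_of_pos hAB ((m:ℝ)/2)]
  have hBA : (B/A)^m = ((A/B)^m)⁻¹ := by rw [← inv_pow, inv_div]
  rw [hBA, ← div_eq_mul_inv, div_le_one hP]
  exact h2

private lemma auxDiscLt (A B lam : ℝ) (hA : 0<A) (hB : 0<B) (hl : 0<lam) (m : ℕ)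
    (h : lam < (1/2)*(A/B) ^ (((m:ℝ))/2)) : 4*lam^2*(B/A)^m < 1 := by
  have hAB : (0:ℝ) < A/B := div_pos hA hB
  have hr : ((A/B) ^ (((m:ℝ))/2))^2 = (A/B)^m := by
    rw [← Real.rpow_natCast ((A/B) ^ (((m:ℝ))/2)) 2, ← Real.rpow_mul hAB.le]
    norm_num [Real.rpow_natCast]
  have hP : (0:ℝ) < (A/B)^m := pow_pos hAB m
  have h2 : 4*lam^2 < (A/B)^m := by nlinarith [Real.rpow_pos_of_pos hAB ((m:ℝ)/2)]
  have hBA : (B/A)^m = ((A/B)^m)⁻¹ := by rw [← inv_pow, inv_div]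
  rw [hBA, ← div_eq_mul_inv, div_lt_one hP]
  exact h2

private lemma auxPos (A B lam ε : ℝ) (hA : 0<A) (hB : 0<B) (hl : 0<lam) (m : ℕ)
    (h : 4*lam^2*(B/A)^m ≤ 1) (hε : ε^2 = 1) :
    0 < A^(m+1)/(2*lam*B^m) * (1 + ε * Real.sqrt (1 - 4*lam^2*(B/A)^m)) := by
  set s := Real.sqrt (1 - 4*lam^2*(B/A)^m) with hs
  have hs2 : s^2 = 1 - 4*lam^2*(B/A)^m := Real.sq_sqrt (by linarith)
  have hsnn : 0 ≤ s := Real.sqrt_nonneg _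
  have hpos : 0 < 4*lam^2*(B/A)^m := by positivity
  have h1s : (0:ℝ) < 1 + ε * s := by
    nlinarith [sq_nonneg (ε*s), sq_nonneg (ε*s+1), sq_nonneg ε]
  positivity

private lemma auxHmul (A B lam ε : ℝ) (hA : 0<A) (hB : 0<B) (hl : 0<lam) (m : ℕ)
    (h : 4*lam^2*(B/A)^m ≤ 1) (hε : ε^2 = 1) :
    lam * A^(m+2) + lam * (A^(m+1)/(2*lam*B^m) * (1 + ε * Real.sqrt (1 - 4*lam^2*(B/A)^m)))^2 * B^m
      = (A^(m+1)/(2*lam*B^m) * (1 + ε * Real.sqrt (1 - 4*lam^2*(B/A)^m))) * A^(m+1) := by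
  have hAm : A^m ≠ 0 := (pow_pos hA m).ne'
  have hBm : (B:ℝ)^m ≠ 0 := (pow_pos hB m).ne'
  set s := Real.sqrt (1 - 4*lam^2*(B/A)^m) with hs
  set C := A^(m+1)/(2*lam*B^m) with hCdef
  have hC : 2*lam*B^m*C = A^(m+1) := by rw [hCdef]; field_simp
  have hs2 : s^2 = 1 - 4*lam^2*(B/A)^m := Real.sq_sqrt (by linarith)
  have hs2' : A^m * s^2 = A^m - 4*lam^2*B^m := by
    rw [hs2, div_pow]; field_simp
  refine mul_left_cancel₀ hAm ?_
  linear_combination (A^m * C*(1+ε*s)) * hC + (lam*C^2*B^m) * hs2'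
    + (A^m*lam*C^2*B^m*s^2) * hε - (lam*(A*A^m + 2*lam*B^m*C)) * hC

private lemma auxMulToEq (A B lam ρ : ℝ) (hA : 0<A) (hB : 0<B) (hl : 0<lam) (hρ : 0<ρ) (m : ℕ)
    (h : lam * A^(m+2) + lam * ρ^2 * B^m = ρ * A^(m+1)) :
    ρ⁻¹ + ρ * B^m / A^(m+2) = 1/(lam*A) := by
  have hAm : A^m ≠ 0 := (pow_pos hA m).ne'
  field_simp
  linear_combination A * h

private lemma auxEqToMul (A B lam ρ : ℝ) (hA : 0<A) (hB : 0<B) (hl : 0<lam) (hρ : 0<ρ) (m : ℕ)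
    (h : ρ⁻¹ + ρ * B^m / A^(m+2) = 1/(lam*A)) :
    lam * A^(m+2) + lam * ρ^2 * B^m = ρ * A^(m+1) := by
  have hAm : A^m ≠ 0 := (pow_pos hA m).ne'
  field_simp at h
  refine mul_left_cancel₀ hA.ne' ?_
  linear_combination h

private lemma auxUnique (A B lam ρ : ℝ) (hA : 0<A) (hB : 0<B) (hl : 0<lam) (hρ : 0<ρ) (m : ℕ)
    (h : 4*lam^2*(B/A)^m ≤ 1)
    (hcl : lam * A^(m+2) + lam * ρ^2 * B^m = ρ * A^(m+1)) :
    ρ = A^(m+1)/(2*lam*B^m) * (1 + Real.sqrt (1 - 4*lam^2*(B/A)^m)) ∨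
    ρ = A^(m+1)/(2*lam*B^m) * (1 - Real.sqrt (1 - 4*lam^2*(B/A)^m)) := by
  have hAm : A^m ≠ 0 := (pow_pos hA m).ne'
  have hBm : (B:ℝ)^m ≠ 0 := (pow_pos hB m).ne'
  set s := Real.sqrt (1 - 4*lam^2*(B/A)^m) with hs
  set C := A^(m+1)/(2*lam*B^m) with hCdef
  have hC : 2*lam*B^m*C = A^(m+1) := by rw [hCdef]; field_simp
  have hs2 : s^2 = 1 - 4*lam^2*(B/A)^m := Real.sq_sqrt (by linarith)
  have hs2' : A^m * s^2 = A^m - 4*lam^2*B^m := by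
    rw [hs2, div_pow]; field_simp
  have key : (A^m * (lam * B^m)) * ((ρ - C*(1+s)) * (ρ - C*(1-s))) = 0 := by
    linear_combination (A^m) * hcl - (ρ*A^m) * hC - (lam*B^m*C^2) * hs2'
      + (lam*(2*lam*B^m*C + A*A^m)) * hC
  have key2 : (ρ - C*(1+s)) * (ρ - C*(1-s)) = 0 := by
    rcases mul_eq_zero.mp key with h' | h'
    · exact absurd h' (by positivity)
    · exact h'
  rcases mul_eq_zero.mp key2 with h' | h'
  · exact Or.inl (by linarith [sub_eq_zero.mp h'])
  · exact Or.inr (by linarith [sub_eq_zero.mp h'])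

/-- For `λ ∈ (0, λ*]` the two explicit functions `ρ_{±,λ}` are positive,
continuous solutions of the radial equation `ρ⁻¹ + ρ·b^{d-1}/a^{d+1} = 1/(λ a)`, and for
`λ ∈ (0, λ*)` they are the only star-body solutions. -/
theorem hellinger_equality_case_solutions {d : ℕ} (hd : 2 ≤ d)
    (a b : sphere (0 : Euc d) 1 → ℝ)
    (ha : Continuous a) (hb : Continuous b)
    (hap : ∀ u, 0 < a u) (hbp : ∀ u, 0 < b u)
    (lstar : ℝ)
    (hlstar : lstar = ⨅ u : sphere (0 : Euc d) 1,
      (1 / 2) * (a u / b u) ^ (((d : ℝ) - 1) / 2))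
    (ρp ρm : ℝ → sphere (0 : Euc d) 1 → ℝ)
    (hρp : ∀ (lam : ℝ) (u : sphere (0 : Euc d) 1),
      ρp lam u = (a u ^ d / (2 * lam * b u ^ (d - 1))) *
        (1 + Real.sqrt (1 - 4 * lam ^ 2 * (b u / a u) ^ (d - 1))))
    (hρm : ∀ (lam : ℝ) (u : sphere (0 : Euc d) 1),
      ρm lam u = (a u ^ d / (2 * lam * b u ^ (d - 1))) *
        (1 - Real.sqrt (1 - 4 * lam ^ 2 * (b u / a u) ^ (d - 1)))) :
    0 < lstar ∧
    (∀ lam : ℝ, 0 < lam → lam ≤ lstar →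
      (Continuous (ρp lam) ∧ (∀ u, 0 < ρp lam u) ∧
        (∀ u, (ρp lam u)⁻¹ + ρp lam u * b u ^ (d - 1) / a u ^ (d + 1) = 1 / (lam * a u))) ∧
      (Continuous (ρm lam) ∧ (∀ u, 0 < ρm lam u) ∧
        (∀ u, (ρm lam u)⁻¹ + ρm lam u * b u ^ (d - 1) / a u ^ (d + 1) = 1 / (lam * a u)))) ∧
    (∀ lam : ℝ, 0 < lam → lam < lstar →
      ∀ K : Set (Euc d), IsStarBody K →
        (∀ u : sphere (0 : Euc d) 1,
          (radialFn K (u : Euc d))⁻¹ +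
            radialFn K (u : Euc d) * b u ^ (d - 1) / a u ^ (d + 1) = 1 / (lam * a u)) →
        (∀ u : sphere (0 : Euc d) 1, radialFn K (u : Euc d) = ρp lam u) ∨
        (∀ u : sphere (0 : Euc d) 1, radialFn K (u : Euc d) = ρm lam u)) := by
  obtain ⟨m, rfl⟩ : ∃ m, d = m + 1 := ⟨d - 1, by omega⟩
  have hm : 1 ≤ m := by omega
  -- basic instances on the sphere
  haveI hne : Nonempty (sphere (0 : Euc (m+1)) 1) :=
    ⟨⟨EuclideanSpace.single ⟨0, by omega⟩ (1:ℝ), by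
      simp [mem_sphere_zero_iff_norm, EuclideanSpace.norm_single]⟩⟩
  haveI hconn : ConnectedSpace (sphere (0 : Euc (m+1)) 1) := by
    have h1 : 1 < Module.rank ℝ (Euc (m+1)) := by
      rw [← Module.finrank_eq_rank]
      have h2 : Module.finrank ℝ (Euc (m+1)) = m+1 := finrank_euclideanSpace_fin
      rw [h2]; exact_mod_cast hd.trans_lt' one_lt_two
    exact Subtype.connectedSpace (isConnected_sphere h1 0 zero_le_one)
  -- clean form of lstar
  have hlstar' : lstar = ⨅ u : sphere (0 : Euc (m+1)) 1,
      (1 / 2) * (a u / b u) ^ ((m:ℝ)/2) := by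
    rw [hlstar]
    congr 1; funext u; congr 1
    push_cast; ring_nf
  have hbdd : BddBelow (Set.range fun u : sphere (0 : Euc (m+1)) 1 =>
      (1 / 2) * (a u / b u) ^ ((m:ℝ)/2)) := by
    refine ⟨0, ?_⟩
    rintro x ⟨u, rfl⟩
    exact mul_nonneg (by norm_num) (Real.rpow_nonneg (div_nonneg (hap u).le (hbp u).le) _)
  have hlow : ∀ u : sphere (0 : Euc (m+1)) 1,
      lstar ≤ (1 / 2) * (a u / b u) ^ ((m:ℝ)/2) := by
    intro u; rw [hlstar']; exact ciInf_le hbdd u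
  have hf : Continuous fun u : sphere (0 : Euc (m+1)) 1 =>
      (1 / 2) * (a u / b u) ^ ((m:ℝ)/2) :=
    continuous_const.mul ((ha.div hb fun u => (hbp u).ne').rpow_const
      fun u => Or.inl (div_pos (hap u) (hbp u)).ne')
  have hlpos : 0 < lstar := by
    obtain ⟨u0, -, hu0⟩ := isCompact_univ.exists_isMinOn Set.univ_nonempty hf.continuousOn
    rw [hlstar']
    refine lt_of_lt_of_le ?_ (le_ciInf fun v => hu0 (Set.mem_univ v))
    have := Real.rpow_pos_of_pos (div_pos (hap u0) (hbp u0)) ((m:ℝ)/2)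
    positivity
  -- explicit forms with clean exponents
  have hρp' : ∀ (lam : ℝ) (u), ρp lam u = a u ^ (m+1) / (2*lam*(b u)^m) *
      (1 + Real.sqrt (1 - 4*lam^2*(b u / a u)^m)) := by
    intro lam u; rw [hρp]; norm_num
  have hρm' : ∀ (lam : ℝ) (u), ρm lam u = a u ^ (m+1) / (2*lam*(b u)^m) *
      (1 - Real.sqrt (1 - 4*lam^2*(b u / a u)^m)) := by
    intro lam u; rw [hρm]; norm_num
  refine ⟨hlpos, ?_, ?_⟩
  · -- part (i)
    intro lam hl0 hle
    have hdisc : ∀ u, 4*lam^2*(b u / a u)^m ≤ 1 := fun u =>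
      auxDiscLe _ _ _ (hap u) (hbp u) hl0 m (hle.trans (hlow u))
    have hcont : ∀ c : ℝ, c^2 = 1 → Continuous fun u : sphere (0 : Euc (m+1)) 1 =>
        a u ^ (m+1) / (2*lam*(b u)^m) * (1 + c * Real.sqrt (1 - 4*lam^2*(b u / a u)^m)) := by
      intro c _
      refine Continuous.mul ?_ ?_
      · exact (ha.pow _).div (continuous_const.mul (hb.pow _))
          fun u => (mul_pos (mul_pos two_pos hl0) (pow_pos (hbp u) m)).ne'
      · exact continuous_const.add (continuous_const.mul (Real.continuous_sqrt.comp
          (continuous_const.sub (continuous_const.mul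
            ((hb.div ha fun u => (hap u).ne').pow m)))))
    constructor
    · refine ⟨?_, ?_, ?_⟩
      · have h1 : ρp lam = fun u => a u ^ (m+1) / (2*lam*(b u)^m) *
            (1 + 1 * Real.sqrt (1 - 4*lam^2*(b u / a u)^m)) := by
          funext u; rw [hρp' lam u]; ring
        rw [h1]; exact hcont 1 (by norm_num)
      · intro u
        rw [hρp' lam u]
        have := auxPos (a u) (b u) lam 1 (hap u) (hbp u) hl0 m (hdisc u) (by norm_num)
        linarith [this]
      · intro u
        have hpos := auxPos (a u) (b u) lam 1 (hap u) (hbp u) hl0 m (hdisc u) (by norm_num)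
        have hmul := auxHmul (a u) (b u) lam 1 (hap u) (hbp u) hl0 m (hdisc u) (by norm_num)
        have := auxMulToEq (a u) (b u) lam _ (hap u) (hbp u) hl0 hpos m hmul
        simp only [Nat.add_sub_cancel]
        rw [hρp' lam u]
        convert this using 3 <;> ring
    · refine ⟨?_, ?_, ?_⟩
      · have h1 : ρm lam = fun u => a u ^ (m+1) / (2*lam*(b u)^m) *
            (1 + (-1) * Real.sqrt (1 - 4*lam^2*(b u / a u)^m)) := by
          funext u; rw [hρm' lam u]; ring
        rw [h1]; exact hcont (-1) (by norm_num)
      · intro u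
        rw [hρm' lam u]
        have := auxPos (a u) (b u) lam (-1) (hap u) (hbp u) hl0 m (hdisc u) (by norm_num)
        have e : (1:ℝ) + (-1) * Real.sqrt (1 - 4*lam^2*(b u / a u)^m)
            = 1 - Real.sqrt (1 - 4*lam^2*(b u / a u)^m) := by ring
        rw [e] at this
        exact this
      · intro u
        have hpos := auxPos (a u) (b u) lam (-1) (hap u) (hbp u) hl0 m (hdisc u) (by norm_num)
        have hmul := auxHmul (a u) (b u) lam (-1) (hap u) (hbp u) hl0 m (hdisc u) (by norm_num)
        have := auxMulToEq (a u) (b u) lam _ (hap u) (hbp u) hl0 hpos m hmul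
        simp only [Nat.add_sub_cancel]
        rw [hρm' lam u]
        convert this using 3 <;> ring
  · -- part (ii)
    intro lam hl0 hlt K hK heq
    have hdisc : ∀ u, 4*lam^2*(b u / a u)^m < 1 := fun u =>
      auxDiscLt _ _ _ (hap u) (hbp u) hl0 m (hlt.trans_le (hlow u))
    have hρK : ∀ u : sphere (0 : Euc (m+1)) 1, 0 < radialFn K (u : Euc (m+1)) :=
      fun u => hK.2.2.2.1 u u.2
    have heq' : ∀ u : sphere (0 : Euc (m+1)) 1,
        (radialFn K (u : Euc (m+1)))⁻¹ +
          radialFn K (u : Euc (m+1)) * (b u)^m / (a u)^(m+2) = 1/(lam * a u) := by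
      intro u
      have := heq u
      simp only [Nat.add_sub_cancel] at this
      convert this using 3 <;> ring
    have hpw : ∀ u : sphere (0 : Euc (m+1)) 1,
        radialFn K (u : Euc (m+1)) = ρp lam u ∨ radialFn K (u : Euc (m+1)) = ρm lam u := by
      intro u
      have hcl := auxEqToMul (a u) (b u) lam _ (hap u) (hbp u) hl0 (hρK u) m (heq' u)
      rcases auxUnique (a u) (b u) lam _ (hap u) (hbp u) hl0 (hρK u) m (hdisc u).le hcl with h | h
      · exact Or.inl (by rw [hρp' lam u]; exact h)
      · exact Or.inr (by rw [hρm' lam u]; exact h)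
    -- the gap function
    set g : sphere (0 : Euc (m+1)) 1 → ℝ :=
      fun u => radialFn K (u : Euc (m+1)) - a u ^ (m+1) / (2*lam*(b u)^m) with hg
    have hgcont : Continuous g := by
      refine Continuous.sub (hK.2.2.2.2.restrict) ?_
      exact (ha.pow _).div (continuous_const.mul (hb.pow _))
        fun u => (mul_pos (mul_pos two_pos hl0) (pow_pos (hbp u) m)).ne'
    have hCpos : ∀ u : sphere (0 : Euc (m+1)) 1, 0 < a u ^ (m+1) / (2*lam*(b u)^m) :=
      fun u => div_pos (pow_pos (hap u) _) (mul_pos (mul_pos two_pos hl0) (pow_pos (hbp u) m))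
    have hspos : ∀ u : sphere (0 : Euc (m+1)) 1,
        0 < Real.sqrt (1 - 4*lam^2*(b u / a u)^m) :=
      fun u => Real.sqrt_pos.mpr (by linarith [hdisc u])
    have hgp : ∀ u : sphere (0 : Euc (m+1)) 1, radialFn K (u : Euc (m+1)) = ρp lam u → 0 < g u := by
      intro u h
      rw [hg]; simp only
      rw [h, hρp' lam u]
      nlinarith [hCpos u, hspos u]
    have hgm : ∀ u : sphere (0 : Euc (m+1)) 1, radialFn K (u : Euc (m+1)) = ρm lam u → g u < 0 := by
      intro u h
      rw [hg]; simp only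
      rw [h, hρm' lam u]
      nlinarith [hCpos u, hspos u]
    have hgne : ∀ u, g u ≠ 0 := by
      intro u
      rcases hpw u with h | h
      · exact (hgp u h).ne'
      · exact (hgm u h).ne
    by_cases hc : ∀ u, 0 < g u
    · left
      intro u
      rcases hpw u with h | h
      · exact h
      · exact absurd (hgm u h) (not_lt.mpr (hc u).le)
    · right
      push_neg at hc
      obtain ⟨v, hv⟩ := hc
      have hvneg : g v < 0 := lt_of_le_of_ne hv (hgne v)
      have hall : ∀ u, g u < 0 := by
        intro u
        by_contra hcon
        push_neg at hcon
        have hupos : 0 < g u := lt_of_le_of_ne hcon (Ne.symm (hgne u))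
        have := intermediate_value_univ v u hgcont
        have h0 : (0:ℝ) ∈ Set.Icc (g v) (g u) := ⟨hvneg.le, hupos.le⟩
        obtain ⟨w, hw⟩ := this h0
        exact hgne w hw
      intro u
      rcases hpw u with h | h
      · exact absurd (hgp u h) (not_lt.mpr (hall u).le)
      · exact h
end
end

section
/- Let K be a star body in ℝ^d (d ≥ 1) and let ρ > 0. Define M_{2,ρ} := {x ∈ ℝ^d : ‖x‖_K² + (ρ/2)‖x‖₂² ≤ 1}. Then M_{2,ρ} is a star body whose gauge satisfies ‖x‖_{M_{2,ρ}}² = ‖x‖_K² + (ρ/2)‖x‖₂² for all x ∈ ℝ^d, and the function x ↦ ‖x‖_K² is ρ-weakly convex if and only if M_{2,ρ} is a convex set. -/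
open MeasureTheory Metric Set Filter Pointwise

noncomputable section

namespace StarAux


variable {d : ℕ}

lemma h_zero {h : Euc d → ℝ}
    (hhom : ∀ t : ℝ, 0 ≤ t → ∀ x, h (t • x) = t * h x) : h 0 = 0 := by
  have := hhom 0 le_rfl 0
  simpa using this

lemma mem_smul_sublevel {h : Euc d → ℝ}
    (hhom : ∀ t : ℝ, 0 ≤ t → ∀ x, h (t • x) = t * h x)
    {t : ℝ} (ht : 0 < t) (x : Euc d) :
    x ∈ t • {y : Euc d | h y ≤ 1} ↔ h x ≤ t := by
  rw [mem_smul_set_iff_inv_smul_mem₀ ht.ne']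
  simp only [Set.mem_setOf_eq]
  rw [hhom t⁻¹ (by positivity), inv_mul_le_iff₀ ht, mul_one]

lemma gauge_sublevel {h : Euc d → ℝ}
    (hhom : ∀ t : ℝ, 0 ≤ t → ∀ x, h (t • x) = t * h x)
    (hnn : ∀ x, 0 ≤ h x) (x : Euc d) :
    gauge {y : Euc d | h y ≤ 1} x = h x := by
  rw [gauge_def]
  have hset : {r ∈ Set.Ioi (0:ℝ) | x ∈ r • {y : Euc d | h y ≤ 1}}
      = {r : ℝ | 0 < r ∧ h x ≤ r} := by
    ext r
    simp only [Set.mem_sep_iff, Set.mem_Ioi, Set.mem_setOf_eq]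
    exact and_congr_right fun hr => mem_smul_sublevel hhom hr x
  rw [hset]
  rcases eq_or_lt_of_le (hnn x) with h0 | h0
  · have : {r : ℝ | 0 < r ∧ h x ≤ r} = Set.Ioi 0 := by
      ext r
      simp only [Set.mem_setOf_eq, Set.mem_Ioi, ← h0]
      exact ⟨fun h' => h'.1, fun h' => ⟨h', h'.le⟩⟩
    rw [this, csInf_Ioi, ← h0]
  · have : {r : ℝ | 0 < r ∧ h x ≤ r} = Set.Ici (h x) := by
      ext r
      simp only [Set.mem_setOf_eq, Set.mem_Ici]
      exact ⟨fun h' => h'.2, fun h' => ⟨lt_of_lt_of_le h0 h', h'⟩⟩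
    rw [this, csInf_Ici]

lemma radialFn_sublevel {h : Euc d → ℝ}
    (hhom : ∀ t : ℝ, 0 ≤ t → ∀ x, h (t • x) = t * h x)
    {u : Euc d} (hu : 0 < h u) :
    radialFn {y : Euc d | h y ≤ 1} u = (h u)⁻¹ := by
  unfold radialFn
  have hset : {t : ℝ | 0 < t ∧ t • u ∈ {y : Euc d | h y ≤ 1}}
      = Set.Ioc 0 (h u)⁻¹ := by
    ext t
    simp only [Set.mem_setOf_eq, Set.mem_Ioc]
    refine and_congr_right fun ht => ?_
    rw [hhom t ht.le, ← le_div_iff₀ hu, one_div]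
  rw [hset, csSup_Ioc (by positivity)]

lemma isStarBody_sublevel {h : Euc d → ℝ} (hc : Continuous h)
    (hhom : ∀ t : ℝ, 0 ≤ t → ∀ x, h (t • x) = t * h x)
    {a b : ℝ} (ha : 0 < a) (hb : 0 < b)
    (hlow : ∀ x, a * ‖x‖ ≤ h x) (hup : ∀ x, h x ≤ b * ‖x‖) :
    IsStarBody {y : Euc d | h y ≤ 1} := by
  have hpos : ∀ x : Euc d, x ≠ 0 → 0 < h x := by
    intro x hx
    have : (0:ℝ) < a * ‖x‖ := by
      have : (0:ℝ) < ‖x‖ := by simpa [norm_pos_iff] using hx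
      positivity
    exact lt_of_lt_of_le this (hlow x)
  refine ⟨?_, ?_, ?_, ?_, ?_⟩
  · refine (isCompact_closedBall (0 : Euc d) a⁻¹).of_isClosed_subset
      (isClosed_le hc continuous_const) ?_
    intro x hx
    simp only [Set.mem_setOf_eq] at hx
    rw [mem_closedBall, dist_zero_right, inv_eq_one_div]
    rw [le_div_iff₀ ha]
    calc ‖x‖ * a = a * ‖x‖ := mul_comm _ _
    _ ≤ h x := hlow x
    _ ≤ 1 := hx
  · rw [mem_interior]
    refine ⟨Metric.ball 0 b⁻¹, ?_, isOpen_ball, mem_ball_self (by positivity)⟩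
    intro x hx
    rw [mem_ball, dist_zero_right] at hx
    simp only [Set.mem_setOf_eq]
    calc h x ≤ b * ‖x‖ := hup x
    _ ≤ b * b⁻¹ := by nlinarith
    _ = 1 := mul_inv_cancel₀ hb.ne'
  · intro x hx y hy
    rw [segment_eq_image] at hy
    obtain ⟨θ, hθ, rfl⟩ := hy
    simp only [smul_zero, sub_zero, zero_add] at *
    simp only [Set.mem_setOf_eq] at hx ⊢
    rw [hhom θ hθ.1]
    have h0 : 0 ≤ h x := le_trans (by positivity) (hlow x)
    nlinarith [hθ.1, hθ.2]
  · intro u hu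
    have hu' : u ≠ 0 := by
      intro h0
      rw [h0] at hu
      simp at hu
    rw [radialFn_sublevel hhom (hpos u hu')]
    exact inv_pos.mpr (hpos u hu')
  · have : ∀ u ∈ sphere (0 : Euc d) 1,
        radialFn {y : Euc d | h y ≤ 1} u = (h u)⁻¹ := by
      intro u hu
      have hu' : u ≠ 0 := by
        intro h0; rw [h0] at hu; simp at hu
      exact radialFn_sublevel hhom (hpos u hu')
    refine ContinuousOn.congr ?_ this
    refine ContinuousOn.inv₀ hc.continuousOn ?_
    intro u hu
    have hu' : u ≠ 0 := by
      intro h0; rw [h0] at hu; simp at hu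
    exact (hpos u hu').ne'


variable {K : Set (Euc d)}


lemma gauge_pos (hK : IsStarBody K) {x : Euc d} (hx : x ≠ 0) : 0 < gauge K x := by
  obtain ⟨R, hR⟩ := hK.1.isBounded.subset_closedBall 0
  have hR1 : K ⊆ Metric.ball (0 : Euc d) (max R 1 + 1) := by
    intro y hy
    have := hR hy
    rw [mem_closedBall, dist_zero_right] at this
    rw [mem_ball, dist_zero_right]
    have : R ≤ max R 1 := le_max_left _ _
    linarith [hR hy, mem_closedBall_zero_iff.mp (hR hy)]
  have habs : Absorbent ℝ K :=
    absorbent_nhds_zero (mem_interior_iff_mem_nhds.mp hK.2.1)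
  have := gauge_mono habs hR1 x
  rw [gauge_ball (by positivity)] at this
  refine lt_of_lt_of_le ?_ this
  have : (0:ℝ) < ‖x‖ := by simpa [norm_pos_iff] using hx
  positivity

lemma gauge_le (hK : IsStarBody K) {r : ℝ} (hr : 0 < r)
    (hrK : Metric.ball (0 : Euc d) r ⊆ K) (x : Euc d) :
    gauge K x ≤ ‖x‖ / r := by
  have habs : Absorbent ℝ (Metric.ball (0 : Euc d) r) :=
    absorbent_nhds_zero (Metric.ball_mem_nhds 0 hr)
  have := gauge_mono habs hrK x
  rwa [gauge_ball hr.le] at this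

lemma mem_smul_iff (hK : IsStarBody K) {x : Euc d} (hx : x ≠ 0)
    {t : ℝ} (ht : 0 < t) : x ∈ t • K ↔ gauge K x ≤ t := by
  obtain ⟨r, hr, hrK⟩ : ∃ r > 0, Metric.ball (0 : Euc d) r ⊆ K := by
    obtain ⟨r, hr, h⟩ := Metric.mem_nhds_iff.mp (mem_interior_iff_mem_nhds.mp hK.2.1)
    exact ⟨r, hr, h⟩
  set T := {s : ℝ | 0 < s ∧ x ∈ s • K} with hT
  have hg : gauge K x = sInf T := rfl
  have hgpos := gauge_pos hK hx
  have hbdd : BddBelow T := ⟨0, fun s hs => hs.1.le⟩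
  -- upward closed
  have hup : ∀ s ∈ T, ∀ s', s ≤ s' → s' ∈ T := by
    rintro s ⟨hs, hsK⟩ s' hss'
    have hs' : 0 < s' := lt_of_lt_of_le hs hss'
    refine ⟨hs', ?_⟩
    rw [mem_smul_set_iff_inv_smul_mem₀ hs'.ne'] at *
    have hmem : s⁻¹ • x ∈ K := by
      rwa [mem_smul_set_iff_inv_smul_mem₀ hs.ne'] at hsK
    have hseg := hK.2.2.1 _ hmem
    have : s'⁻¹ • x = (s / s') • (s⁻¹ • x) := by
      rw [smul_smul]
      congr 1
      field_simp
    rw [this]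
    refine hseg ?_
    rw [segment_eq_image]
    refine ⟨s / s', ⟨by positivity, by rw [div_le_one hs']; exact hss'⟩, by simp⟩
  -- nonempty
  have hne : T.Nonempty := by
    refine ⟨‖x‖ / r + 1, by positivity, ?_⟩
    rw [mem_smul_set_iff_inv_smul_mem₀ (by positivity : (‖x‖/r + 1 : ℝ) ≠ 0)]
    refine hrK ?_
    rw [mem_ball, dist_zero_right, norm_smul, norm_inv, Real.norm_eq_abs,
      abs_of_pos (by positivity)]
    rw [inv_mul_lt_iff₀ (by positivity)]
    have hx' : (0:ℝ) < ‖x‖ := by simpa [norm_pos_iff] using hx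
    have : (‖x‖ / r + 1) * r = ‖x‖ + r := by field_simp
    rw [this]
    linarith
  -- gauge value is attained
  have hmem_g : gauge K x ∈ T := by
    have hforall : ∀ s ∈ Set.Ioi (gauge K x), s⁻¹ • x ∈ K := by
      intro s hs
      obtain ⟨s', hs'T, hs's⟩ := exists_lt_of_csInf_lt hne (by exact hs)
      have hT2 := hup s' hs'T s hs's.le
      have h2 := hT2.2
      rwa [mem_smul_set_iff_inv_smul_mem₀ hT2.1.ne'] at h2
    have htend : Tendsto (fun s : ℝ => s⁻¹ • x) (nhdsWithin (gauge K x) (Set.Ioi (gauge K x)))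
        (nhds ((gauge K x)⁻¹ • x)) := by
      refine Tendsto.mono_left ?_ nhdsWithin_le_nhds
      exact ((continuousAt_inv₀ hgpos.ne').smul continuousAt_const)
    have hev : ∀ᶠ s in nhdsWithin (gauge K x) (Set.Ioi (gauge K x)),
        (fun s : ℝ => s⁻¹ • x) s ∈ K :=
      eventually_mem_nhdsWithin.mono fun s hs => hforall s hs
    have hcl : IsClosed K := hK.1.isClosed
    have : (gauge K x)⁻¹ • x ∈ K := hcl.mem_of_tendsto htend hev
    exact ⟨hgpos, by rwa [mem_smul_set_iff_inv_smul_mem₀ hgpos.ne']⟩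
  constructor
  · intro hxt
    exact csInf_le hbdd ⟨ht, hxt⟩
  · intro hgt
    exact (hup _ hmem_g t hgt).2

lemma radial_eq_inv_gauge (hK : IsStarBody K) {u : Euc d} (hu : u ≠ 0) :
    radialFn K u = (gauge K u)⁻¹ := by
  have hgpos := gauge_pos hK hu
  unfold radialFn
  have hset : {t : ℝ | 0 < t ∧ t • u ∈ K} = Set.Ioc 0 (gauge K u)⁻¹ := by
    ext t
    simp only [Set.mem_setOf_eq, Set.mem_Ioc]
    refine and_congr_right fun ht => ?_
    have : t • u ∈ K ↔ u ∈ t⁻¹ • K := by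
      rw [mem_smul_set_iff_inv_smul_mem₀ (by positivity : (t:ℝ)⁻¹ ≠ 0), inv_inv]
    rw [this, mem_smul_iff hK hu (by positivity), le_inv_comm₀ hgpos ht]
  rw [hset, csSup_Ioc (by positivity)]

lemma gauge_continuous (hK : IsStarBody K) : Continuous (gauge K) := by
  obtain ⟨r, hr, hrK⟩ : ∃ r > 0, Metric.ball (0 : Euc d) r ⊆ K := by
    obtain ⟨r, hr, h⟩ := Metric.mem_nhds_iff.mp (mem_interior_iff_mem_nhds.mp hK.2.1)
    exact ⟨r, hr, h⟩
  rw [continuous_iff_continuousAt]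
  intro x₀
  by_cases hx₀ : x₀ = 0
  · rw [hx₀]
    exact continuousAt_gauge_zero (mem_interior_iff_mem_nhds.mp hK.2.1)
  · -- gauge K x = ‖x‖ * (radialFn K (‖x‖⁻¹ • x))⁻¹ near x₀
    have hx₀n : (0:ℝ) < ‖x₀‖ := by simpa [norm_pos_iff] using hx₀
    have hne : {x : Euc d | x ≠ 0} ∈ nhds x₀ :=
      (isOpen_compl_singleton).mem_nhds hx₀
    have heq : ∀ x : Euc d, x ≠ 0 →
        gauge K x = ‖x‖ * (radialFn K (‖x‖⁻¹ • x))⁻¹ := by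
      intro x hx
      have hxn : (0:ℝ) < ‖x‖ := by simpa [norm_pos_iff] using hx
      have hnu : (‖x‖⁻¹ • x) ≠ 0 := by
        simp [smul_eq_zero, hx, hxn.ne']
      rw [radial_eq_inv_gauge hK hnu, inv_inv,
        gauge_smul_of_nonneg (by positivity : (0:ℝ) ≤ ‖x‖⁻¹), smul_eq_mul]
      field_simp
    have hF : ContinuousAt (fun x : Euc d => ‖x‖ * (radialFn K (‖x‖⁻¹ • x))⁻¹) x₀ := by
      have hn : ContinuousAt (fun x : Euc d => ‖x‖⁻¹ • x) x₀ :=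
        ((continuous_norm.continuousAt).inv₀ hx₀n.ne').smul continuousAt_id
      have hmem : (‖x₀‖⁻¹ • x₀) ∈ sphere (0 : Euc d) 1 := by
        simp [norm_smul, abs_of_pos (inv_pos.mpr hx₀n), inv_mul_cancel₀ hx₀n.ne']
      have hrad : ContinuousAt (fun x : Euc d => radialFn K (‖x‖⁻¹ • x)) x₀ := by
        have hcw : ContinuousWithinAt (radialFn K) (sphere (0:Euc d) 1) (‖x₀‖⁻¹ • x₀) :=
          hK.2.2.2.2 _ hmem
        refine hcw.tendsto.comp ?_
        rw [tendsto_nhdsWithin_iff]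
        refine ⟨hn, ?_⟩
        filter_upwards [hne] with x hx
        have hxn : (0:ℝ) < ‖x‖ := by simpa [norm_pos_iff] using hx
        simp [norm_smul, abs_of_pos (inv_pos.mpr hxn), inv_mul_cancel₀ hxn.ne']
      have hradpos : 0 < radialFn K (‖x₀‖⁻¹ • x₀) := hK.2.2.2.1 _ hmem
      exact (continuous_norm.continuousAt).mul (hrad.inv₀ hradpos.ne')
    refine hF.congr ?_
    filter_upwards [hne] with x hx
    exact (heq x hx).symm


end StarAux

/-- `M_{2,ρ} = {x : ‖x‖_K² + (ρ/2)‖x‖₂² ≤ 1}` is a star body whose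
squared gauge is `‖x‖_K² + (ρ/2)‖x‖₂²`, and `‖·‖_K²` is `ρ`-weakly convex iff `M_{2,ρ}`
is convex. -/
theorem weakly_convex_iff_harmonic_combination_convex {d : ℕ} (hd : 1 ≤ d)
    (K : Set (Euc d)) (hK : IsStarBody K) (ρ : ℝ) (hρ : 0 < ρ) :
    IsStarBody {x : Euc d | gauge K x ^ 2 + ρ / 2 * ‖x‖ ^ 2 ≤ 1} ∧
    (∀ x : Euc d, gauge {x : Euc d | gauge K x ^ 2 + ρ / 2 * ‖x‖ ^ 2 ≤ 1} x ^ 2 =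
      gauge K x ^ 2 + ρ / 2 * ‖x‖ ^ 2) ∧
    (ConvexOn ℝ Set.univ (fun x : Euc d => gauge K x ^ 2 + ρ / 2 * ‖x‖ ^ 2) ↔
      Convex ℝ {x : Euc d | gauge K x ^ 2 + ρ / 2 * ‖x‖ ^ 2 ≤ 1}) := by
  classical
  set h : Euc d → ℝ := fun x => Real.sqrt (gauge K x ^ 2 + ρ / 2 * ‖x‖ ^ 2) with hh
  have hgnn : ∀ x : Euc d, (0:ℝ) ≤ gauge K x ^ 2 + ρ / 2 * ‖x‖ ^ 2 := by
    intro x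
    have := gauge_nonneg (s := K) x
    positivity
  have hsq : ∀ x : Euc d, h x ^ 2 = gauge K x ^ 2 + ρ / 2 * ‖x‖ ^ 2 := fun x =>
    Real.sq_sqrt (hgnn x)
  have hhnn : ∀ x : Euc d, 0 ≤ h x := fun x => Real.sqrt_nonneg _
  -- set equality
  have hsetEq : {x : Euc d | gauge K x ^ 2 + ρ / 2 * ‖x‖ ^ 2 ≤ 1}
      = {y : Euc d | h y ≤ 1} := by
    ext x
    simp only [Set.mem_setOf_eq]
    constructor
    · intro hx
      have h2 : h x ≤ Real.sqrt 1 := Real.sqrt_le_sqrt hx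
      simpa using h2
    · intro hx
      have := hsq x
      nlinarith [hhnn x]
  -- homogeneity
  have hhom : ∀ t : ℝ, 0 ≤ t → ∀ x : Euc d, h (t • x) = t * h x := by
    intro t ht x
    have h1 : gauge K (t • x) = t * gauge K x := by
      rw [gauge_smul_of_nonneg ht, smul_eq_mul]
    have h2 : ‖t • x‖ = t * ‖x‖ := by
      rw [norm_smul, Real.norm_eq_abs, abs_of_nonneg ht]
    simp only [hh]
    rw [h1, h2]
    have : (t * gauge K x) ^ 2 + ρ / 2 * (t * ‖x‖) ^ 2
        = t ^ 2 * (gauge K x ^ 2 + ρ / 2 * ‖x‖ ^ 2) := by ring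
    rw [this, Real.sqrt_mul (sq_nonneg t), Real.sqrt_sq ht]
  -- continuity
  have hgc : Continuous (gauge K) := StarAux.gauge_continuous hK
  have hcont : Continuous h := by
    refine Real.continuous_sqrt.comp ?_
    exact (hgc.pow 2).add (continuous_const.mul (continuous_norm.pow 2))
  -- bounds
  obtain ⟨r, hr, hrK⟩ : ∃ r > 0, Metric.ball (0 : Euc d) r ⊆ K := by
    obtain ⟨r, hr, h⟩ := Metric.mem_nhds_iff.mp (mem_interior_iff_mem_nhds.mp hK.2.1)
    exact ⟨r, hr, h⟩
  have hlow : ∀ x : Euc d, Real.sqrt (ρ / 2) * ‖x‖ ≤ h x := by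
    intro x
    have h1 : Real.sqrt (ρ / 2) * ‖x‖ = Real.sqrt (ρ / 2 * ‖x‖ ^ 2) := by
      rw [Real.sqrt_mul (by positivity), Real.sqrt_sq (norm_nonneg x)]
    rw [h1]
    exact Real.sqrt_le_sqrt (by nlinarith [sq_nonneg (gauge K x)])
  have hup : ∀ x : Euc d, h x ≤ Real.sqrt (r⁻¹ ^ 2 + ρ / 2) * ‖x‖ := by
    intro x
    have hgle : gauge K x ≤ r⁻¹ * ‖x‖ := by
      have := StarAux.gauge_le hK hr hrK x
      rwa [div_eq_inv_mul] at this
    have h1 : Real.sqrt (r⁻¹ ^ 2 + ρ / 2) * ‖x‖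
        = Real.sqrt ((r⁻¹ ^ 2 + ρ / 2) * ‖x‖ ^ 2) := by
      rw [Real.sqrt_mul (by positivity), Real.sqrt_sq (norm_nonneg x)]
    rw [h1]
    refine Real.sqrt_le_sqrt ?_
    have : gauge K x ^ 2 ≤ (r⁻¹ * ‖x‖) ^ 2 :=
      pow_le_pow_left₀ (gauge_nonneg x) hgle 2
    nlinarith
  have ha : (0:ℝ) < Real.sqrt (ρ / 2) := Real.sqrt_pos.mpr (by positivity)
  have hb : (0:ℝ) < Real.sqrt (r⁻¹ ^ 2 + ρ / 2) := Real.sqrt_pos.mpr (by positivity)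
  have hgauge : ∀ x : Euc d, gauge {y : Euc d | h y ≤ 1} x = h x :=
    StarAux.gauge_sublevel hhom hhnn
  refine ⟨?_, ?_, ?_⟩
  · rw [hsetEq]
    exact StarAux.isStarBody_sublevel hcont hhom ha hb hlow hup
  · intro x
    rw [hsetEq, hgauge x, hsq x]
  · constructor
    · intro hconv
      have := hconv.convex_le 1
      simpa [Set.sep_univ] using this
    · intro hM
      rw [hsetEq] at hM
      have habs : Absorbent ℝ {y : Euc d | h y ≤ 1} := by
        refine absorbent_nhds_zero ?_
        refine mem_interior_iff_mem_nhds.mp ?_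
        exact (StarAux.isStarBody_sublevel hcont hhom ha hb hlow hup).2.1
      have hsub : ∀ x y : Euc d, h (x + y) ≤ h x + h y := by
        intro x y
        have := gauge_add_le hM habs x y
        rwa [hgauge, hgauge, hgauge] at this
      refine ⟨convex_univ, ?_⟩
      intro x _ y _ a b ha' hb' hab
      simp only [smul_eq_mul]
      rw [← hsq, ← hsq, ← hsq]
      have h1 : h (a • x + b • y) ≤ a * h x + b * h y := by
        calc h (a • x + b • y) ≤ h (a • x) + h (b • y) := hsub _ _
        _ = a * h x + b * h y := by rw [hhom a ha', hhom b hb']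
      have h2 : h (a • x + b • y) ^ 2 ≤ (a * h x + b * h y) ^ 2 :=
        pow_le_pow_left₀ (hhnn _) h1 2
      have h3 : (a * h x + b * h y) ^ 2 ≤ a * h x ^ 2 + b * h y ^ 2 := by
        nlinarith [sq_nonneg (h x - h y), mul_nonneg ha' hb']
      linarith
end
end

section
/- Let L ≥ 1 and let d = d_0 ≤ d_1 ≤ ⋯ ≤ d_L be positive integers. For each i ∈ {1,…,L} let f_i : ℝ^{d_{i−1}} → ℝ^{d_i} be injective, continuous, and positively homogeneous (f_i(t·x) = t·f_i(x) for all t ≥ 0), and let G : ℝ^{d_L} → ℝ be continuous, nonnegative, positively homogeneous (G(t·y) = t·G(y) for all t ≥ 0), and vanishing only at the origin (G(y) = 0 ⟺ y = 0). Define R := G ∘ f_L ∘ ⋯ ∘ f_1 : ℝ^d → ℝ. Then K := {x ∈ ℝ^d : R(x) ≤ 1} is a star body in ℝ^d whose radial function satisfies ρ_K(x) = 1/R(x) for all x ≠ 0. -/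
open MeasureTheory Metric Set Filter Pointwise

noncomputable section

/-- Composition of the first `n` layers of a network with layer dimensions `dim`. -/
def chainLayers (dim : ℕ → ℕ) (f : ∀ i : ℕ, Euc (dim i) → Euc (dim (i + 1))) :
    (n : ℕ) → Euc (dim 0) → Euc (dim n)
  | 0 => id
  | n + 1 => fun x => f n (chainLayers dim f n x)

lemma chain_cont (dim : ℕ → ℕ) (f : ∀ i : ℕ, Euc (dim i) → Euc (dim (i+1))) (L : ℕ)
    (hfc : ∀ i < L, Continuous (f i)) : ∀ n ≤ L, Continuous (chainLayers dim f n) := by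
  intro n
  induction n with
  | zero => intro _; exact continuous_id
  | succ n ih =>
    intro h
    exact (hfc n (lt_of_lt_of_le (Nat.lt_succ_self n) h)).comp
      (ih (le_of_lt (lt_of_lt_of_le (Nat.lt_succ_self n) h)))

lemma chain_smul (dim : ℕ → ℕ) (f : ∀ i : ℕ, Euc (dim i) → Euc (dim (i+1))) (L : ℕ)
    (hfh : ∀ i < L, ∀ t : ℝ, 0 ≤ t → ∀ x : Euc (dim i), f i (t • x) = t • f i x) :
    ∀ n ≤ L, ∀ t : ℝ, 0 ≤ t → ∀ x, chainLayers dim f n (t • x) = t • chainLayers dim f n x := by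
  intro n
  induction n with
  | zero => intro _ t _ x; rfl
  | succ n ih =>
    intro h t ht x
    have hn : n < L := lt_of_lt_of_le (Nat.lt_succ_self n) h
    show f n (chainLayers dim f n (t • x)) = t • f n (chainLayers dim f n x)
    rw [ih hn.le t ht x, hfh n hn t ht]

lemma chain_inj (dim : ℕ → ℕ) (f : ∀ i : ℕ, Euc (dim i) → Euc (dim (i+1))) (L : ℕ)
    (hfinj : ∀ i < L, Function.Injective (f i)) :
    ∀ n ≤ L, Function.Injective (chainLayers dim f n) := by
  intro n
  induction n with
  | zero => intro _; exact fun a b h => h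
  | succ n ih =>
    intro h
    have hn : n < L := lt_of_lt_of_le (Nat.lt_succ_self n) h
    exact (hfinj n hn).comp (ih hn.le)


/-- A neural-network regularizer built from injective, continuous,
positively homogeneous layers and a nonnegative, positively homogeneous, continuous final
layer vanishing only at the origin has star-body sublevel set `{R ≤ 1}` with radial
function `1/R`. -/
theorem neuralNetwork_sublevel_isStarBody (L : ℕ) (hL : 1 ≤ L) (dim : ℕ → ℕ)
    (hdim : ∀ i ≤ L, 0 < dim i) (hmono : ∀ i < L, dim i ≤ dim (i + 1))
    (f : ∀ i : ℕ, Euc (dim i) → Euc (dim (i + 1)))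
    (hfinj : ∀ i < L, Function.Injective (f i))
    (hfc : ∀ i < L, Continuous (f i))
    (hfh : ∀ i < L, ∀ t : ℝ, 0 ≤ t → ∀ x : Euc (dim i), f i (t • x) = t • f i x)
    (G : Euc (dim L) → ℝ) (hGc : Continuous G) (hGnn : ∀ y, 0 ≤ G y)
    (hGh : ∀ t : ℝ, 0 ≤ t → ∀ y : Euc (dim L), G (t • y) = t * G y)
    (hG0 : ∀ y : Euc (dim L), G y = 0 ↔ y = 0) :
    IsStarBody {x : Euc (dim 0) | G (chainLayers dim f L x) ≤ 1} ∧
    ∀ x : Euc (dim 0), x ≠ 0 →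
      radialFn {x : Euc (dim 0) | G (chainLayers dim f L x) ≤ 1} x =
        (G (chainLayers dim f L x))⁻¹ := by
  set R : Euc (dim 0) → ℝ := fun x => G (chainLayers dim f L x) with hRdef
  set K : Set (Euc (dim 0)) := {x | R x ≤ 1} with hKdef
  have hRc : Continuous R := hGc.comp (chain_cont dim f L hfc L le_rfl)
  have hRh : ∀ t : ℝ, 0 ≤ t → ∀ x, R (t • x) = t * R x := by
    intro t ht x
    simp only [hRdef]
    rw [chain_smul dim f L hfh L le_rfl t ht x, hGh t ht]
  have hchain0 : chainLayers dim f L (0 : Euc (dim 0)) = 0 := by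
    have := chain_smul dim f L hfh L le_rfl 0 le_rfl 0
    simpa using this
  have hR0 : ∀ x, R x = 0 ↔ x = 0 := by
    intro x
    rw [hRdef]
    simp only []
    rw [hG0]
    constructor
    · intro h
      exact chain_inj dim f L hfinj L le_rfl (h.trans hchain0.symm)
    · intro h; rw [h, hchain0]
  have hRpos : ∀ x : Euc (dim 0), x ≠ 0 → 0 < R x := by
    intro x hx
    rcases (hGnn (chainLayers dim f L x)).lt_or_eq with h | h
    · exact h
    · exact absurd ((hR0 x).mp h.symm) hx
  -- membership in K
  have hmemK : ∀ x : Euc (dim 0), x ∈ K ↔ R x ≤ 1 := fun x => Iff.rfl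
  -- radial function formula
  have hrad : ∀ x : Euc (dim 0), x ≠ 0 → radialFn K x = (R x)⁻¹ := by
    intro x hx
    have hRx : 0 < R x := hRpos x hx
    have hset : {t : ℝ | 0 < t ∧ t • x ∈ K} = Ioc 0 (R x)⁻¹ := by
      ext t
      simp only [mem_setOf_eq, mem_Ioc, hmemK]
      constructor
      · rintro ⟨ht, hK⟩
        refine ⟨ht, ?_⟩
        rw [hRh t ht.le x] at hK
        rw [← one_div, le_div_iff₀ hRx]
        exact hK
      · rintro ⟨ht, hK⟩
        refine ⟨ht, ?_⟩
        rw [hRh t ht.le x]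
        rw [← one_div, le_div_iff₀ hRx] at hK
        exact hK
    rw [radialFn, hset, csSup_Ioc (by positivity)]
  -- compactness
  have hclosed : IsClosed K := isClosed_le hRc continuous_const
  have hdim0 : 0 < dim 0 := hdim 0 (Nat.zero_le L)
  have hu0 : ((EuclideanSpace.single (⟨0, hdim0⟩ : Fin (dim 0)) (1:ℝ)) : Euc (dim 0)) ∈
      sphere (0 : Euc (dim 0)) 1 := by
    simp [mem_sphere_zero_iff_norm, EuclideanSpace.norm_single]
  obtain ⟨u, hu, hmin⟩ := (isCompact_sphere (0 : Euc (dim 0)) 1).exists_isMinOn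
    ⟨_, hu0⟩ hRc.continuousOn
  have hune : u ≠ 0 := by
    intro h
    rw [h] at hu
    simp at hu
  have hm : 0 < R u := hRpos u hune
  have hbdd : K ⊆ closedBall 0 (R u)⁻¹ := by
    intro x hx
    rw [mem_closedBall, dist_zero_right]
    rcases eq_or_ne x 0 with rfl | hxne
    · simp [inv_nonneg.mpr hm.le]
    · have hxn : (0:ℝ) < ‖x‖ := norm_pos_iff.mpr hxne
      have hu' : ‖x‖⁻¹ • x ∈ sphere (0 : Euc (dim 0)) 1 := by
        simp [mem_sphere_zero_iff_norm, norm_smul, abs_of_pos (inv_pos.mpr hxn),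
          inv_mul_cancel₀ hxn.ne']
      have h1 : R u ≤ ‖x‖⁻¹ * R x := by
        have h1' : R u ≤ R (‖x‖⁻¹ • x) := hmin hu'
        rwa [hRh _ (inv_nonneg.mpr hxn.le) x] at h1'
      have h2 : R x ≤ 1 := hx
      have hmul : R u * ‖x‖ ≤ 1 := by
        calc R u * ‖x‖ ≤ (‖x‖⁻¹ * R x) * ‖x‖ := by nlinarith
          _ = R x := by field_simp
          _ ≤ 1 := h2
      have h6 : (R u)⁻¹ * (R u * ‖x‖) = ‖x‖ := by field_simp
      have := mul_le_mul_of_nonneg_left hmul (inv_nonneg.mpr hm.le)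
      rw [h6] at this
      linarith
  have hcomp : IsCompact K :=
    (isCompact_closedBall (0 : Euc (dim 0)) (R u)⁻¹).of_isClosed_subset hclosed hbdd
  -- 0 in interior
  have hint : (0 : Euc (dim 0)) ∈ interior K := by
    have hsub : {x : Euc (dim 0) | R x < 1} ⊆ K := fun x hx => (hmemK x).mpr (le_of_lt hx)
    have hopen : IsOpen {x : Euc (dim 0) | R x < 1} := isOpen_lt hRc continuous_const
    exact interior_maximal hsub hopen (show R 0 < 1 by rw [(hR0 0).mpr rfl]; norm_num)
  -- star shaped
  have hstar : ∀ x ∈ K, segment ℝ (0 : Euc (dim 0)) x ⊆ K := by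
    intro x hx y hy
    rw [segment_eq_image] at hy
    obtain ⟨t, ht, hty⟩ := hy
    have : y = t • x := by rw [← hty]; simp
    rw [hmemK, this, hRh t ht.1 x]
    exact mul_le_one₀ ht.2 (hGnn _) hx
  refine ⟨⟨hcomp, hint, hstar, ?_, ?_⟩, fun x hx => hrad x hx⟩
  · intro v hv
    have hvne : v ≠ 0 := fun h => by rw [h] at hv; simp at hv
    rw [hrad v hvne]
    exact inv_pos.mpr (hRpos v hvne)
  · have h1 : ContinuousOn (fun v => (R v)⁻¹) (sphere (0 : Euc (dim 0)) 1) :=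
      hRc.continuousOn.inv₀ (fun v hv =>
        (hRpos v (fun h => by rw [h] at hv; simp at hv)).ne')
    exact h1.congr (fun v hv => hrad v (fun h => by rw [h] at hv; simp at hv))
end
end

section
/- Fix d ≥ 1 and γ > 0, and let D_r, D_n be Borel probability measures on ℝ^d with E_{D_r}[‖x‖₂] < ∞ and E_{D_n}[‖x‖₂] < ∞. On a probability space, let (X_j)_{j≥1} and (Y_j)_{j≥1} be i.i.d. sequences with laws D_r and D_n respectively, and for N ≥ 1 let D_r^N := (1/N) Σ_{j=1}^N δ_{X_j} and D_n^N := (1/N) Σ_{j=1}^N δ_{Y_j} be the empirical measures. Then almost surely, sup_{K ∈ S^d(γ,1)} | F(K; D_r^N, D_n^N) − F(K; D_r, D_n) | → 0 as N → ∞. -/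
open MeasureTheory Metric Set Filter Pointwise

noncomputable section

/-- The empirical measure of the first `N` samples of the sequence `X`. -/
def empiricalMeasure {d : ℕ} {Ω : Type} (X : ℕ → Ω → Euc d) (ω : Ω) (N : ℕ) :
    Measure (Euc d) :=
  (N : ENNReal)⁻¹ • ∑ j ∈ Finset.range N, Measure.dirac (X j ω)

/-! If `closedBall 0 γ` lies in the kernel of `K`, then `gauge K` is `γ⁻¹`-Lipschitz, so the
gauges of the class, restricted to the unit sphere, form a bounded equicontinuous family. By
Arzelà–Ascoli, for every `η > 0` finitely many of them approximate each member within `η` on the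
sphere, hence within `η ‖x‖` everywhere by positive homogeneity. The strong law of large numbers
for these countably many gauges and for `‖x‖` then yields, almost surely, convergence of the
empirical integrals that is uniform over the whole class. -/

open Topology ProbabilityTheory

section GaugeLipschitz

variable {E : Type*} [NormedAddCommGroup E] [NormedSpace ℝ E] {K : Set E} {γ : ℝ}

-- Hypotheses `hK` below spell out `closedBall 0 γ ⊆ starKernel K` in an arbitrary normed space.

lemma smul_add_smul_mem_smul_of_segment_subset {k w : E} (hseg : segment ℝ w k ⊆ K)
    {t b : ℝ} (ht : 0 < t) (hb : 0 < b) : t • k + b • w ∈ (t + b) • K := by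
  have htb : 0 < t + b := add_pos ht hb
  refine ⟨(b / (t + b)) • w + (t / (t + b)) • k, hseg ⟨_, _, by positivity, by positivity,
    by rw [← add_div, add_comm, div_self htb.ne'], rfl⟩, ?_⟩
  simp only [smul_add, smul_smul]
  rw [mul_div_cancel₀ _ htb.ne', mul_div_cancel₀ _ htb.ne']
  exact add_comm _ _

lemma gauge_le_gauge_add_norm_sub_div (hγ : 0 < γ)
    (hK : ∀ w ∈ closedBall (0 : E) γ, w ∈ K ∧ ∀ k ∈ K, segment ℝ w k ⊆ K) (x y : E) :
    gauge K x ≤ gauge K y + ‖x - y‖ / γ := by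
  have habs : Absorbent ℝ K :=
    absorbent_nhds_zero (mem_of_superset (closedBall_mem_nhds 0 hγ) fun w hw => (hK w hw).1)
  refine le_of_forall_pos_lt_add fun ε hε => ?_
  obtain ⟨t, ht, htlt, k, hk, rfl⟩ :=
    exists_lt_of_gauge_lt habs (lt_add_of_pos_right (gauge K y) (half_pos hε))
  beta_reduce at htlt
  set b := ‖x - t • k‖ / γ + ε / 2 with hb_def
  have hb : 0 < b := by positivity
  have hw : b⁻¹ • (x - t • k) ∈ closedBall (0 : E) γ := by
    rw [mem_closedBall_zero_iff, norm_smul, norm_inv, Real.norm_of_nonneg hb.le,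
      inv_mul_le_iff₀ hb]
    have : ‖x - t • k‖ / γ ≤ b := le_add_of_nonneg_right (half_pos hε).le
    rwa [div_le_iff₀ hγ] at this
  have hx : x ∈ (t + b) • K := by
    simpa [smul_inv_smul₀ hb.ne'] using
      smul_add_smul_mem_smul_of_segment_subset ((hK _ hw).2 k hk) ht hb
  calc gauge K x ≤ t + b := gauge_le_of_mem (by positivity) hx
    _ < gauge K (t • k) + ‖x - t • k‖ / γ + ε := by rw [hb_def]; linarith

lemma lipschitzWith_gauge (hγ : 0 < γ)
    (hK : ∀ w ∈ closedBall (0 : E) γ, w ∈ K ∧ ∀ k ∈ K, segment ℝ w k ⊆ K) :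
    LipschitzWith (Real.toNNReal γ⁻¹) (gauge K) :=
  LipschitzWith.of_le_add_mul' γ⁻¹ fun x y => by
    rw [dist_eq_norm, inv_mul_eq_div]
    exact gauge_le_gauge_add_norm_sub_div hγ hK x y

lemma gauge_le_norm_div (hγ : 0 < γ) (h0 : closedBall (0 : E) γ ⊆ K) (x : E) :
    gauge K x ≤ ‖x‖ / γ := by
  rw [← gauge_closedBall hγ.le]
  exact gauge_mono (absorbent_nhds_zero (closedBall_mem_nhds 0 hγ)) h0 x

lemma abs_gauge_sub_gauge_le_mul_norm {L : Set E} {ε : ℝ}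
    (h : ∀ u ∈ sphere (0 : E) 1, |gauge K u - gauge L u| ≤ ε) (x : E) :
    |gauge K x - gauge L x| ≤ ε * ‖x‖ := by
  rcases eq_or_ne x 0 with rfl | hx
  · simp
  have hx' : ‖x‖ ≠ 0 := norm_ne_zero_iff.2 hx
  have hu : ‖x‖⁻¹ • x ∈ sphere (0 : E) 1 := by
    rw [mem_sphere_zero_iff_norm, norm_smul, norm_inv, norm_norm, inv_mul_cancel₀ hx']
  have hhom : ∀ M : Set E, gauge M x = ‖x‖ * gauge M (‖x‖⁻¹ • x) := fun M => by
    rw [← smul_eq_mul, ← gauge_smul_of_nonneg (norm_nonneg x), smul_inv_smul₀ hx']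
  rw [hhom K, hhom L, ← mul_sub, abs_mul, abs_norm, mul_comm ε]
  exact mul_le_mul_of_nonneg_left (h _ hu) (norm_nonneg x)

lemma integrable_gauge [MeasurableSpace E] [OpensMeasurableSpace E] (hγ : 0 < γ)
    (hK : ∀ w ∈ closedBall (0 : E) γ, w ∈ K ∧ ∀ k ∈ K, segment ℝ w k ⊆ K) {ρ : Measure E}
    (hρ : Integrable (‖·‖) ρ) : Integrable (gauge K) ρ :=
  (hρ.div_const γ).mono' (lipschitzWith_gauge hγ hK).continuous.aestronglyMeasurable <|
    .of_forall fun x => by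
      rw [Real.norm_of_nonneg (gauge_nonneg x)]
      exact gauge_le_norm_div hγ (fun w hw => (hK w hw).1) x

end GaugeLipschitz

open BoundedContinuousFunction in
lemma Equicontinuous.exists_finite_dist_lt {α β ι : Type*} [TopologicalSpace α]
    [CompactSpace α] [MetricSpace β] {f : ι → α → β} (hf : Equicontinuous f) {s : Set β}
    (hs : IsCompact s) (hfs : ∀ i x, f i x ∈ s) {ε : ℝ} (hε : 0 < ε) :
    ∃ t : Set ι, t.Finite ∧ ∀ i, ∃ j ∈ t, ∀ x, dist (f i x) (f j x) < ε := by
  let F : ι → α →ᵇ β := fun i => mkOfCompact ⟨f i, hf.continuous i⟩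
  have hF : Equicontinuous ((↑) : range F → α → β) := by
    rintro x U hU
    filter_upwards [hf x U hU] with y hy
    rintro ⟨_, i, rfl⟩
    exact hy i
  have hcpt := arzela_ascoli s hs (range F) (by rintro _ x ⟨i, rfl⟩; exact hfs i x) hF
  obtain ⟨t, -, htfin, hcover⟩ := exists_subset_image_finite_and.1 (by
    rw [image_univ]
    exact finite_approx_of_totallyBounded (hcpt.totallyBounded.subset subset_closure) ε hε)
  refine ⟨t, htfin, fun i => ?_⟩
  obtain ⟨_, ⟨j, hj, rfl⟩, hij⟩ := mem_iUnion₂.1 (hcover (mem_range_self i))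
  exact ⟨j, hj, fun x => (dist_coe_le_dist x).trans_lt hij⟩

lemma abs_integral_sub_integral_le_mul {E : Type*} [NormedAddCommGroup E] [MeasurableSpace E]
    {ρ : Measure E} {f g : E → ℝ} (hf : Integrable f ρ) (hg : Integrable g ρ)
    (hn : Integrable (‖·‖) ρ) {η : ℝ} (h : ∀ x, |f x - g x| ≤ η * ‖x‖) :
    |∫ x, f x ∂ρ - ∫ x, g x ∂ρ| ≤ η * ∫ x, ‖x‖ ∂ρ := by
  rw [← integral_sub hf hg, ← integral_const_mul]
  exact abs_integral_le_integral_abs.trans (integral_mono (hf.sub hg).abs (hn.const_mul η) h)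

lemma tendstoUniformlyOn_integral_of_forall_approx {E ι : Type*} [NormedAddCommGroup E]
    [MeasurableSpace E] {f : ι → E → ℝ} {s : Set ι} {ρ : ℕ → Measure E} {ρ' : Measure E}
    (hf : ∀ i ∈ s, ∀ N, Integrable (f i) (ρ N)) (hf' : ∀ i ∈ s, Integrable (f i) ρ')
    (hnormN : ∀ N, Integrable (‖·‖) (ρ N)) (hnorm' : Integrable (‖·‖) ρ')
    (hnorm : Tendsto (fun N => ∫ x, ‖x‖ ∂ρ N) atTop (𝓝 (∫ x, ‖x‖ ∂ρ')))
    (happrox : ∀ η > 0, ∃ t ⊆ s, t.Finite ∧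
      (∀ j ∈ t, Tendsto (fun N => ∫ x, f j x ∂ρ N) atTop (𝓝 (∫ x, f j x ∂ρ'))) ∧
      ∀ i ∈ s, ∃ j ∈ t, ∀ x, |f i x - f j x| ≤ η * ‖x‖) :
    TendstoUniformlyOn (fun N i => ∫ x, f i x ∂ρ N) (fun i => ∫ x, f i x ∂ρ') atTop s := by
  rw [Metric.tendstoUniformlyOn_iff]
  intro ε hε
  set M := ∫ x, ‖x‖ ∂ρ'
  have hM : 0 ≤ M := integral_nonneg fun x => norm_nonneg x
  set η := ε / (2 * M + 3)
  have hη : 0 < η := by positivity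
  have hηε : η * (2 * M + 2) < ε := by
    calc η * (2 * M + 2) < η * (2 * M + 3) := by gcongr; norm_num
      _ = ε := div_mul_cancel₀ ε (by positivity)
  obtain ⟨t, hts, htfin, htconv, hst⟩ := happrox η hη
  have hnormN_le : ∀ᶠ N in atTop, ∫ x, ‖x‖ ∂ρ N < M + 1 :=
    hnorm.eventually (gt_mem_nhds (lt_add_one M))
  have hnet : ∀ᶠ N in atTop, ∀ j ∈ t, |∫ x, f j x ∂ρ' - ∫ x, f j x ∂ρ N| < η :=
    htfin.eventually_all.2 fun j hj => by
      simpa only [Real.dist_eq, abs_sub_comm] using Metric.tendsto_nhds.1 (htconv j hj) η hη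
  filter_upwards [hnormN_le, hnet] with N hN hNt i hi
  obtain ⟨j, hj, hij⟩ := hst i hi
  have hρN := abs_integral_sub_integral_le_mul (hf i hi N) (hf j (hts hj) N) (hnormN N) hij
  have hρ' := abs_integral_sub_integral_le_mul (hf' i hi) (hf' j (hts hj)) hnorm' hij
  rw [Real.dist_eq]
  calc |∫ x, f i x ∂ρ' - ∫ x, f i x ∂ρ N|
      ≤ |∫ x, f i x ∂ρ' - ∫ x, f j x ∂ρ'| + |∫ x, f j x ∂ρ' - ∫ x, f j x ∂ρ N|
        + |∫ x, f j x ∂ρ N - ∫ x, f i x ∂ρ N| :=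
          (abs_sub_le _ (∫ x, f j x ∂ρ N) _).trans (add_le_add_left (abs_sub_le _ _ _) _)
    _ < η * M + η + η * (M + 1) := by
      rw [abs_sub_comm (∫ x, f j x ∂ρ N)]
      exact add_lt_add_of_lt_of_le (add_lt_add_of_le_of_lt hρ' (hNt j hj))
        (hρN.trans (mul_le_mul_of_nonneg_left hN.le hη.le))
    _ = η * (2 * M + 2) := by ring
    _ < ε := hηε

lemma TendstoUniformlyOn.tendsto_iSup_abs_sub {ι α : Type*} {F : α → ι → ℝ} {f : ι → ℝ}
    {l : Filter α} {s : Set ι} (h : TendstoUniformlyOn F f l s) :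
    Tendsto (fun a => ⨆ i ∈ s, |F a i - f i|) l (𝓝 0) := by
  rw [Metric.tendsto_nhds]
  intro ε hε
  filter_upwards [Metric.tendstoUniformlyOn_iff.1 h (ε / 2) (half_pos hε)] with a ha
  have hle : ⨆ i ∈ s, |F a i - f i| ≤ ε / 2 :=
    Real.iSup_le (fun i => Real.iSup_le (fun hi => by
      rw [abs_sub_comm, ← Real.dist_eq]; exact (ha i hi).le) (half_pos hε).le) (half_pos hε).le
  rw [Real.dist_eq, sub_zero,
    abs_of_nonneg (Real.iSup_nonneg fun i => Real.iSup_nonneg fun _ => abs_nonneg _)]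
  exact hle.trans_lt (half_lt_self hε)

section Empirical

variable {d : ℕ} {Ω : Type}

lemma integrable_empiricalMeasure (X : ℕ → Ω → Euc d) (ω : Ω) (N : ℕ) (f : Euc d → ℝ) :
    Integrable f (empiricalMeasure X ω N) := by
  rcases eq_or_ne N 0 with rfl | hN
  · simp [empiricalMeasure]
  refine Integrable.smul_measure ?_ (by simpa using hN)
  exact integrable_finsetSum_measure.2 fun j _ => integrable_dirac (by simp)

lemma integral_empiricalMeasure (X : ℕ → Ω → Euc d) (ω : Ω) (N : ℕ) (f : Euc d → ℝ) :
    ∫ x, f x ∂(empiricalMeasure X ω N) = (N : ℝ)⁻¹ • ∑ j ∈ Finset.range N, f (X j ω) := by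
  rw [empiricalMeasure, integral_smul_measure,
    integral_finsetSum_measure fun j _ => integrable_dirac (by simp)]
  simp [integral_dirac, ENNReal.toReal_inv]

lemma ae_tendsto_integral_empiricalMeasure [MeasureSpace Ω] {ρ : Measure (Euc d)}
    {X : ℕ → Ω → Euc d} (hXm : ∀ j, Measurable (X j)) (hXindep : iIndepFun X)
    (hXlaw : ∀ j, Measure.map (X j) volume = ρ) {g : Euc d → ℝ} (hg : Measurable g)
    (hgi : Integrable g ρ) :
    ∀ᵐ ω, Tendsto (fun N => ∫ x, g x ∂(empiricalMeasure X ω N)) atTop (𝓝 (∫ x, g x ∂ρ)) := by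
  have hident : ∀ j, IdentDistrib (X j) (X 0) :=
    fun j => ⟨(hXm j).aemeasurable, (hXm 0).aemeasurable, by rw [hXlaw j, hXlaw 0]⟩
  have hint : Integrable (g ∘ X 0) := by
    rw [← hXlaw 0] at hgi
    exact hgi.comp_measurable (hXm 0)
  have hmean : ∫ ω, g (X 0 ω) = ∫ x, g x ∂ρ := by
    rw [← hXlaw 0, integral_map (hXm 0).aemeasurable hg.aestronglyMeasurable]
  filter_upwards [strong_law_ae (fun j => g ∘ X j) hint
    (fun i j hij => (hXindep.indepFun hij).comp hg hg) (fun j => (hident j).comp hg)] with ω hω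
  simpa only [integral_empiricalMeasure, ← hmean, Function.comp_apply] using hω

end Empirical

section StarKernel

variable {d : ℕ} {γ : ℝ}

lemma exists_finite_gauge_approx (hγ : 0 < γ) {η : ℝ} (hη : 0 < η) :
    ∃ t ⊆ {K : Set (Euc d) | closedBall 0 γ ⊆ starKernel K}, t.Finite ∧
      ∀ K ∈ {K : Set (Euc d) | closedBall 0 γ ⊆ starKernel K}, ∃ L ∈ t,
        ∀ x, |gauge K x - gauge L x| ≤ η * ‖x‖ := by
  let f : {K : Set (Euc d) // closedBall 0 γ ⊆ starKernel K} → sphere (0 : Euc d) 1 → ℝ :=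
    fun K u => gauge K.1 u
  have hf : Equicontinuous f := (LipschitzWith.uniformEquicontinuous f _ fun K =>
    (lipschitzWith_gauge hγ K.2).comp (LipschitzWith.subtype_val _)).equicontinuous
  have hfs : ∀ K u, f K u ∈ Icc 0 γ⁻¹ := fun K u => ⟨gauge_nonneg _, by
    have hu : ‖(u : Euc d)‖ = 1 := mem_sphere_zero_iff_norm.1 u.2
    have := gauge_le_norm_div hγ (fun w hw => (K.2 hw).1) (u : Euc d)
    rwa [hu, one_div] at this⟩
  obtain ⟨t, htfin, ht⟩ := hf.exists_finite_dist_lt isCompact_Icc hfs hη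
  refine ⟨Subtype.val '' t, by rintro _ ⟨K, -, rfl⟩; exact K.2, htfin.image _, fun K hK => ?_⟩
  obtain ⟨L, hL, hKL⟩ := ht ⟨K, hK⟩
  exact ⟨L, mem_image_of_mem _ hL, abs_gauge_sub_gauge_le_mul_norm fun u hu =>
    (hKL ⟨u, hu⟩).le⟩

lemma ae_tendstoUniformlyOn_integral_gauge_empiricalMeasure {Ω : Type} [MeasureSpace Ω]
    (hγ : 0 < γ) {ρ : Measure (Euc d)} (hρ : Integrable (‖·‖) ρ) {X : ℕ → Ω → Euc d}
    (hXm : ∀ j, Measurable (X j)) (hXindep : iIndepFun X)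
    (hXlaw : ∀ j, Measure.map (X j) volume = ρ) :
    ∀ᵐ ω, TendstoUniformlyOn (fun N K => ∫ x, gauge K x ∂(empiricalMeasure X ω N))
      (fun K => ∫ x, gauge K x ∂ρ) atTop {K : Set (Euc d) | closedBall 0 γ ⊆ starKernel K} := by
  choose t hts htfin happrox using fun m : ℕ =>
    exists_finite_gauge_approx (d := d) hγ (Nat.one_div_pos_of_nat (n := m))
  have hnet : ∀ᵐ ω, ∀ m, ∀ L ∈ t m, Tendsto (fun N => ∫ x, gauge L x ∂(empiricalMeasure X ω N))
      atTop (𝓝 (∫ x, gauge L x ∂ρ)) :=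
    ae_all_iff.2 fun m => (htfin m).eventually_all.2 fun L hL =>
      ae_tendsto_integral_empiricalMeasure hXm hXindep hXlaw
        (lipschitzWith_gauge hγ (hts m hL)).continuous.measurable
        (integrable_gauge hγ (hts m hL) hρ)
  filter_upwards [ae_tendsto_integral_empiricalMeasure hXm hXindep hXlaw measurable_norm hρ,
    hnet] with ω hnorm hnetω
  refine tendstoUniformlyOn_integral_of_forall_approx
    (fun _ _ _ => integrable_empiricalMeasure X ω _ _) (fun K hK => integrable_gauge hγ hK hρ)
    (fun _ => integrable_empiricalMeasure X ω _ _) hρ hnorm fun η hη => ?_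
  obtain ⟨m, hm⟩ := exists_nat_one_div_lt hη
  refine ⟨t m, hts m, htfin m, hnetω m, fun K hK => ?_⟩
  obtain ⟨L, hL, hKL⟩ := happrox m K hK
  exact ⟨L, hL, fun x => (hKL x).trans (by gcongr)⟩

end StarKernel

theorem uniform_convergence_empirical_Fobj_general {d : ℕ} (γ : ℝ) (hγ : 0 < γ)
    (μ ν : Measure (Euc d))
    (hμ : Integrable (fun x => ‖x‖) μ) (hν : Integrable (fun x => ‖x‖) ν)
    {Ω : Type} [MeasureSpace Ω]
    (X Y : ℕ → Ω → Euc d)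
    (hXm : ∀ j, Measurable (X j)) (hYm : ∀ j, Measurable (Y j))
    (hXindep : ProbabilityTheory.iIndepFun X (volume : Measure Ω))
    (hYindep : ProbabilityTheory.iIndepFun Y (volume : Measure Ω))
    (hXlaw : ∀ j, Measure.map (X j) (volume : Measure Ω) = μ) (hYlaw : ∀ j, Measure.map (Y j) (volume : Measure Ω) = ν) :
    ∀ᵐ ω ∂(volume : Measure Ω),
      Tendsto (fun N : ℕ =>
        ⨆ K ∈ {K : Set (Euc d) | IsStarBody K ∧
            closedBall (0 : Euc d) γ ⊆ starKernel K ∧ volume K = 1},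
          |Fobj K (empiricalMeasure X ω N) (empiricalMeasure Y ω N) - Fobj K μ ν|)
        atTop (nhds 0) := by
  filter_upwards [ae_tendstoUniformlyOn_integral_gauge_empiricalMeasure hγ hμ hXm hXindep hXlaw,
    ae_tendstoUniformlyOn_integral_gauge_empiricalMeasure hγ hν hYm hYindep hYlaw] with ω hXω hYω
  exact ((hXω.sub hYω).mono fun K hK => hK.2.1).tendsto_iSup_abs_sub

/-- Uniform strong law of large numbers for the adversarial objective over
the class `S^d(γ,1)`: the empirical objective converges to the population objective,
uniformly over `S^d(γ,1)`, almost surely. -/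
theorem uniform_convergence_empirical_Fobj {d : ℕ} (hd : 1 ≤ d) (γ : ℝ) (hγ : 0 < γ)
    (μ ν : Measure (Euc d)) [IsProbabilityMeasure μ] [IsProbabilityMeasure ν]
    (hμ : Integrable (fun x => ‖x‖) μ) (hν : Integrable (fun x => ‖x‖) ν)
    {Ω : Type} [MeasureSpace Ω] [IsProbabilityMeasure (volume : Measure Ω)]
    (X Y : ℕ → Ω → Euc d)
    (hXm : ∀ j, Measurable (X j)) (hYm : ∀ j, Measurable (Y j))
    (hXindep : ProbabilityTheory.iIndepFun X (volume : Measure Ω))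
    (hYindep : ProbabilityTheory.iIndepFun Y (volume : Measure Ω))
    (hXlaw : ∀ j, Measure.map (X j) (volume : Measure Ω) = μ) (hYlaw : ∀ j, Measure.map (Y j) (volume : Measure Ω) = ν) :
    ∀ᵐ ω ∂(volume : Measure Ω),
      Tendsto (fun N : ℕ =>
        ⨆ K ∈ {K : Set (Euc d) | IsStarBody K ∧
            closedBall (0 : Euc d) γ ⊆ starKernel K ∧ volume K = 1},
          |Fobj K (empiricalMeasure X ω N) (empiricalMeasure Y ω N) - Fobj K μ ν|)
        atTop (nhds 0) :=
  uniform_convergence_empirical_Fobj_general γ hγ μ ν hμ hν X Y hXm hYm hXindep hYindep hXlaw hYlaw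
end
end

section
/- Let K be a star body in ℝ^d (d ≥ 1). The gauge function x ↦ ‖x‖_K is 1-Lipschitz on ℝ^d with respect to the Euclidean norm if and only if the closed Euclidean unit ball B^d is contained in ker(K). -/
open MeasureTheory Metric Set Filter Pointwise

noncomputable section

/-!
If `s` is star-convex with respect to a point `u` and `y = b • k` with `k ∈ s`, then
`y + r • u` is `b + r` times a convex combination of `k` and `u`, so moving by `r • u` raises
the gauge by at most `r`. Writing `x - y` as `‖x - y‖` times a vector of the unit ball gives the
`1`-Lipschitz bound. Conversely, if the gauge is `1`-Lipschitz and `‖b‖ ≤ 1`, `y ∈ s`, then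
`gauge (a • b + c • y) ≤ gauge (c • y) + ‖a • b‖ ≤ c + a = 1` for a convex combination, and a
closed set star-shaped about `0` contains its gauge sublevel set `{gauge ≤ 1}`.
-/

section Gauge

variable {E : Type*} [AddCommGroup E] [Module ℝ E] {s : Set E}

theorem StarConvex.mem_of_gauge_lt_one (hs : StarConvex ℝ 0 s) (ha : Absorbent ℝ s) {x : E}
    (h : gauge s x < 1) : x ∈ s := by
  by_contra hx
  exact h.not_ge (one_le_gauge_of_notMem hs (ha.absorbs (x := x)) hx)

theorem StarConvex.mem_closure_of_gauge_le_one [TopologicalSpace E] [ContinuousSMul ℝ E]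
    (hs : StarConvex ℝ 0 s) (ha : Absorbent ℝ s) {x : E} (h : gauge s x ≤ 1) :
    x ∈ closure s := by
  have hmem : ∀ᶠ r : ℝ in nhdsWithin 1 (Iio 1), r • x ∈ s := by
    filter_upwards [Ico_mem_nhdsLT one_pos] with r ⟨hr₀, hr₁⟩
    refine hs.mem_of_gauge_lt_one ha ?_
    rw [gauge_smul_of_nonneg hr₀, smul_eq_mul]
    exact mul_lt_one_of_nonneg_of_lt_one_left hr₀ hr₁ h
  refine mem_closure_of_tendsto ?_ hmem
  exact Tendsto.mono_left (Continuous.tendsto' (by fun_prop) _ _ (one_smul _ _))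
    inf_le_left

theorem gauge_add_smul_le_of_starConvex (ha : Absorbent ℝ s) {u : E} (hu : StarConvex ℝ u s)
    {r : ℝ} (hr : 0 ≤ r) (y : E) : gauge s (y + r • u) ≤ gauge s y + r := by
  refine le_of_forall_pos_lt_add fun ε hε => ?_
  obtain ⟨b, hb, hbt, k, hk, hky⟩ :=
    exists_lt_of_gauge_lt ha (lt_add_of_pos_right (gauge s y) hε)
  have hbr : 0 < b + r := by positivity
  have hmem : (r / (b + r)) • u + (b / (b + r)) • k ∈ s :=
    hu hk (by positivity) (by positivity) (by field_simp; ring)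
  have hsplit : (b + r) • ((r / (b + r)) • u + (b / (b + r)) • k) = y + r • u := by
    rw [smul_add, smul_smul, smul_smul, mul_div_cancel₀ _ hbr.ne', mul_div_cancel₀ _ hbr.ne',
      ← hky, add_comm]
  calc gauge s (y + r • u) ≤ b + r := gauge_le_of_mem hbr.le ⟨_, hmem, hsplit⟩
    _ < gauge s y + r + ε := by linarith

end Gauge

section Lipschitz

variable {E : Type*} [NormedAddCommGroup E] [NormedSpace ℝ E] {s : Set E}

theorem lipschitzWith_one_gauge_of_starConvex_closedBall (ha : Absorbent ℝ s)
    (hball : ∀ u ∈ closedBall (0 : E) 1, StarConvex ℝ u s) : LipschitzWith 1 (gauge s) := by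
  refine LipschitzWith.of_le_add fun x y => ?_
  set u := ‖x - y‖⁻¹ • (x - y)
  have hu : u ∈ closedBall (0 : E) 1 := by
    rw [mem_closedBall_zero_iff, norm_smul, norm_inv, norm_norm]
    exact inv_mul_le_one_of_le₀ le_rfl (norm_nonneg _)
  have hx : x = y + ‖x - y‖ • u := by
    rcases eq_or_ne x y with rfl | hxy
    · simp
    · rw [smul_inv_smul₀ (norm_ne_zero_iff.2 (sub_ne_zero.2 hxy)), add_sub_cancel]
  calc gauge s x = gauge s (y + ‖x - y‖ • u) := by rw [← hx]
    _ ≤ gauge s y + ‖x - y‖ := gauge_add_smul_le_of_starConvex ha (hball u hu) (norm_nonneg _) y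
    _ = gauge s y + dist x y := by rw [dist_eq_norm]

theorem starConvex_of_lipschitzWith_one_gauge (hL : LipschitzWith 1 (gauge s))
    (hs : StarConvex ℝ 0 s) (ha : Absorbent ℝ s) (hcl : IsClosed s) {b : E}
    (hb : b ∈ closedBall (0 : E) 1) : StarConvex ℝ b s := by
  intro y hy a c ha0 hc0 hac
  refine hcl.closure_subset (hs.mem_closure_of_gauge_le_one ha ?_)
  have hab : ‖a • b‖ ≤ a := by
    rw [norm_smul, Real.norm_of_nonneg ha0]
    exact mul_le_of_le_one_right ha0 (mem_closedBall_zero_iff.1 hb)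
  calc gauge s (a • b + c • y) ≤ gauge s (c • y) + dist (a • b + c • y) (c • y) := by
        simpa using hL.le_add_mul (a • b + c • y) (c • y)
    _ ≤ c * 1 + a := by
        rw [gauge_smul_of_nonneg hc0, smul_eq_mul, dist_eq_norm, add_sub_cancel_right]
        gcongr
        exact gauge_le_one_of_mem hy
    _ = 1 := by linarith

end Lipschitz

theorem gauge_lipschitz_iff_ball_subset_kernel_general {d : ℕ}
    (K : Set (Euc d)) (hK : IsStarBody K) :
    LipschitzWith 1 (fun x : Euc d => gauge K x) ↔
      closedBall (0 : Euc d) 1 ⊆ starKernel K := by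
  obtain ⟨hcompact, hinterior, hstar, -, -⟩ := hK
  have hs : StarConvex ℝ 0 K := starConvex_iff_segment_subset.2 hstar
  have ha : Absorbent ℝ K := absorbent_nhds_zero (mem_interior_iff_mem_nhds.1 hinterior)
  constructor
  · intro hL b hb
    have hb : StarConvex ℝ b K :=
      starConvex_of_lipschitzWith_one_gauge hL hs ha hcompact.isClosed hb
    exact ⟨hb.mem ⟨0, interior_subset hinterior⟩, starConvex_iff_segment_subset.1 hb⟩
  · intro hker
    exact lipschitzWith_one_gauge_of_starConvex_closedBall ha fun u hu =>
      starConvex_iff_segment_subset.2 (hker hu).2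

/-- The gauge of a star body `K` is `1`-Lipschitz if and only if the
closed Euclidean unit ball is contained in the kernel of `K`. -/
theorem gauge_lipschitz_iff_ball_subset_kernel {d : ℕ} (hd : 1 ≤ d)
    (K : Set (Euc d)) (hK : IsStarBody K) :
    LipschitzWith 1 (fun x : Euc d => gauge K x) ↔
      closedBall (0 : Euc d) 1 ⊆ starKernel K :=
  gauge_lipschitz_iff_ball_subset_kernel_general K hK
end
end

section
/- Fix d ≥ 2 and γ > 0. If K is a star body in ℝ^d with γ·B^d ⊆ ker(K) and vol_d(K) = 1, then K ⊆ R_γ·B^d, where R_γ := (d+1) / (γ^{d−1}·κ_{d−1}) and κ_{d−1} is the (d−1)-dimensional Lebesgue volume of the closed unit ball of ℝ^{d−1}. -/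
open MeasureTheory Metric Set Filter Pointwise

noncomputable section

/-! If `‖b‖ ≤ γ` then `b` lies in the kernel, so the segment from `b` to any `x ∈ K` lies in `K`.
Hence `K` contains the cone with apex `x` over the `(d-1)`-disc of radius `γ` orthogonal to `x`,
whose volume `γ^(d-1) κ_{d-1} ‖x‖ / d` is therefore at most `vol K = 1`. The volume of the cone is
computed after a reflection taking `‖x‖ • e_d` to `x`, by slicing along the last coordinate. -/

lemma volume_setOf_sum_sq_le (n : ℕ) {r : ℝ} (hr : 0 ≤ r) :
    volume {w : Fin n → ℝ | ∑ j, w j ^ 2 ≤ r ^ 2}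
      = ENNReal.ofReal (r ^ n) * volume (closedBall (0 : Euc n) 1) := by
  have hset : {w : Fin n → ℝ | ∑ j, w j ^ 2 ≤ r ^ 2}
      = WithLp.toLp 2 ⁻¹' closedBall (0 : Euc n) r := by
    ext w
    rw [mem_preimage, mem_closedBall_zero_iff, ← sq_le_sq₀ (norm_nonneg _) hr,
      EuclideanSpace.norm_sq_eq]
    simp
  rw [hset, (PiLp.volume_preserving_toLp (Fin n)).measure_preimage
    measurableSet_closedBall.nullMeasurableSet, Measure.addHaar_closedBall' _ _ hr,
    finrank_euclideanSpace_fin]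

lemma integral_mul_one_sub_div_pow (n : ℕ) (γ : ℝ) {h : ℝ} (hh : h ≠ 0) :
    ∫ t in (0 : ℝ)..h, (γ * (1 - t / h)) ^ n = γ ^ n * (h / (n + 1)) := by
  simp_rw [mul_pow]
  rw [intervalIntegral.integral_const_mul,
    intervalIntegral.integral_comp_div (fun u => (1 - u) ^ n) hh,
    intervalIntegral.integral_comp_sub_left (fun u => u ^ n), integral_pow]
  simp [div_self hh, div_eq_mul_inv]

/-- The cone with apex `h • e_last` over the disc of radius `γ` in the hyperplane `y_last = 0`. -/
def uprightCone (n : ℕ) (γ h : ℝ) : Set (Euc (n + 1)) :=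
  {y | y (Fin.last n) ∈ Icc 0 h ∧
    ∑ j : Fin n, y (Fin.castSucc j) ^ 2 ≤ (γ * (1 - y (Fin.last n) / h)) ^ 2}

lemma volume_uprightCone (n : ℕ) {γ h : ℝ} (hγ : 0 ≤ γ) (hh : 0 < h) :
    volume (uprightCone n γ h)
      = ENNReal.ofReal (γ ^ n * (h / (n + 1))) * volume (closedBall (0 : Euc n) 1) := by
  set s : Set (ℝ × (Fin n → ℝ)) :=
    Prod.fst ⁻¹' Icc 0 h ∩ {p | ∑ j, p.2 j ^ 2 ≤ (γ * (1 - p.1 / h)) ^ 2}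
  have hs : MeasurableSet s :=
    (measurable_fst measurableSet_Icc).inter (measurableSet_le (by fun_prop) (by fun_prop))
  have hcone : uprightCone n γ h = (MeasurableEquiv.toLp 2 (Fin (n + 1) → ℝ)).symm ⁻¹'
      (MeasurableEquiv.piFinSuccAbove (fun _ => ℝ) (Fin.last n) ⁻¹' s) := by
    ext y
    simp [uprightCone, s, Fin.insertNthEquiv, Fin.init]
  have hradius {t : ℝ} (ht : t ∈ Icc 0 h) : 0 ≤ γ * (1 - t / h) :=
    mul_nonneg hγ (sub_nonneg.2 ((div_le_one hh).2 ht.2))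
  have hslice (t : ℝ) : volume (Prod.mk t ⁻¹' s)
      = (Icc 0 h).indicator (fun t => ENNReal.ofReal ((γ * (1 - t / h)) ^ n)) t
        * volume (closedBall (0 : Euc n) 1) := by
    by_cases ht : t ∈ Icc 0 h
    · have : Prod.mk t ⁻¹' s = {w | ∑ j, w j ^ 2 ≤ (γ * (1 - t / h)) ^ 2} := by
        ext w
        exact and_iff_right ht
      rw [this, volume_setOf_sum_sq_le n (hradius ht), indicator_of_mem ht]
    · have : Prod.mk t ⁻¹' s = ∅ := eq_empty_of_forall_notMem fun w hw => ht hw.1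
      rw [this, indicator_of_notMem ht, measure_empty, zero_mul]
  rw [hcone, (EuclideanSpace.volume_preserving_symm_measurableEquiv_toLp _).measure_preimage_equiv,
    (volume_preserving_piFinSuccAbove (fun _ => ℝ) (Fin.last n)).measure_preimage_equiv,
    Measure.volume_eq_prod, Measure.prod_apply hs]
  simp_rw [hslice]
  rw [lintegral_mul_const _ ((by fun_prop : Measurable _).indicator measurableSet_Icc),
    lintegral_indicator measurableSet_Icc, ← ofReal_integral_eq_lintegral_ofReal
      (by fun_prop : Continuous fun t : ℝ => (γ * (1 - t / h)) ^ n).integrableOn_Icc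
      ((ae_restrict_iff' measurableSet_Icc).2 (.of_forall fun t ht => pow_nonneg (hradius ht) n)),
    integral_Icc_eq_integral_Ioc, ← intervalIntegral.integral_of_le hh.le,
    integral_mul_one_sub_div_pow n γ hh.ne']

lemma add_smul_mem_of_closedBall_subset_starKernel {d : ℕ} {γ : ℝ} (hγ : 0 ≤ γ)
    {K : Set (Euc d)} (hker : closedBall 0 γ ⊆ starKernel K) {x : Euc d} (hx : x ∈ K)
    {t : ℝ} (ht0 : 0 ≤ t) (ht1 : t ≤ 1) {v : Euc d} (hv : ‖v‖ ≤ (1 - t) * γ) :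
    v + t • x ∈ K := by
  have hv : v ∈ (1 - t) • closedBall (0 : Euc d) γ := by
    rwa [smul_closedBall _ _ hγ, smul_zero, Real.norm_of_nonneg (sub_nonneg.2 ht1),
      mem_closedBall_zero_iff]
  obtain ⟨b, hb, rfl⟩ := hv
  exact (hker hb).2 x hx ⟨1 - t, t, sub_nonneg.2 ht1, ht0, sub_add_cancel 1 t, rfl⟩

lemma norm_sq_sub_smul_single_last {n : ℕ} (y : Euc (n + 1)) :
    ‖y - y (Fin.last n) • EuclideanSpace.single (Fin.last n) 1‖ ^ 2
      = ∑ j : Fin n, y (Fin.castSucc j) ^ 2 := by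
  rw [EuclideanSpace.norm_sq_eq, Fin.sum_univ_castSucc]
  simp [(Fin.castSucc_lt_last _).ne]

lemma uprightCone_subset_preimage {n : ℕ} {γ h : ℝ} (hγ : 0 ≤ γ) (hh : 0 < h)
    {K : Set (Euc (n + 1))} (hker : closedBall 0 γ ⊆ starKernel K) {x : Euc (n + 1)} (hx : x ∈ K)
    (Φ : Euc (n + 1) ≃ₗᵢ[ℝ] Euc (n + 1))
    (hΦ : Φ (h • EuclideanSpace.single (Fin.last n) 1) = x) :
    uprightCone n γ h ⊆ Φ ⁻¹' K := by
  rintro y ⟨⟨hy0, hyh⟩, hysum⟩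
  set e : Euc (n + 1) := EuclideanSpace.single (Fin.last n) 1
  set t := y (Fin.last n) / h
  have ht0 : 0 ≤ t := div_nonneg hy0 hh.le
  have ht1 : t ≤ 1 := (div_le_one hh).2 hyh
  have hw : ‖Φ (y - y (Fin.last n) • e)‖ ≤ (1 - t) * γ := by
    rw [LinearIsometryEquiv.norm_map, ← sq_le_sq₀ (norm_nonneg _)
      (mul_nonneg (sub_nonneg.2 ht1) hγ), norm_sq_sub_smul_single_last, mul_comm]
    exact hysum
  have hy : Φ y = Φ (y - y (Fin.last n) • e) + t • x := by
    rw [← hΦ, ← LinearIsometryEquiv.map_smul, ← map_add, smul_smul, div_mul_cancel₀ _ hh.ne',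
      sub_add_cancel]
  rw [mem_preimage, hy]
  exact add_smul_mem_of_closedBall_subset_starKernel hγ hker hx ht0 ht1 hw

lemma volume_cone_le_of_closedBall_subset_starKernel {n : ℕ} {γ : ℝ} (hγ : 0 ≤ γ)
    {K : Set (Euc (n + 1))} (hker : closedBall 0 γ ⊆ starKernel K) {x : Euc (n + 1)} (hx : x ∈ K) :
    ENNReal.ofReal (γ ^ n * (‖x‖ / (n + 1))) * volume (closedBall (0 : Euc n) 1) ≤ volume K := by
  rcases (norm_nonneg x).eq_or_lt with hx0 | hpos
  · simp [← hx0]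
  set e : Euc (n + 1) := EuclideanSpace.single (Fin.last n) 1
  have hnorm : ‖‖x‖ • e‖ = ‖x‖ := by
    rw [norm_smul, PiLp.norm_single, norm_one, mul_one, norm_norm]
  set Φ := Submodule.reflection (ℝ ∙ (‖x‖ • e - x))ᗮ
  calc _ = volume (uprightCone n γ ‖x‖) := (volume_uprightCone n hγ hpos).symm
    _ ≤ volume (Φ ⁻¹' K) :=
      measure_mono (uprightCone_subset_preimage hγ hpos hker hx Φ (Submodule.reflection_sub hnorm))
    _ = volume K := Φ.measurePreserving.measure_preimage_equiv (f := Φ.toMeasurableEquiv) K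

theorem Sg1_uniformly_bounded_general {d : ℕ} (hd : 2 ≤ d) (γ : ℝ) (hγ : 0 < γ)
    (K : Set (Euc d))
    (hker : closedBall (0 : Euc d) γ ⊆ starKernel K)
    (hvol : volume K = 1) :
    K ⊆ closedBall (0 : Euc d)
      ((d + 1) / (γ ^ (d - 1) * (volume (closedBall (0 : Euc (d - 1)) 1)).toReal)) := by
  obtain ⟨n, rfl⟩ : ∃ n, d = n + 1 := ⟨d - 1, by omega⟩
  intro x hx
  set κ := (volume (closedBall (0 : Euc n) 1)).toReal
  have hκ : 0 < κ := ENNReal.toReal_pos (measure_closedBall_pos _ _ one_pos).ne'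
    measure_closedBall_lt_top.ne
  have hcone := volume_cone_le_of_closedBall_subset_starKernel hγ.le hker hx
  rw [hvol, ← ENNReal.ofReal_toReal measure_closedBall_lt_top.ne,
    ← ENNReal.ofReal_mul (by positivity), ENNReal.ofReal_le_one] at hcone
  rw [mem_closedBall_zero_iff, Nat.add_sub_cancel, le_div_iff₀ (by positivity)]
  push_cast
  calc ‖x‖ * (γ ^ n * κ) = γ ^ n * (‖x‖ / (n + 1)) * κ * (n + 1) := by field_simp
    _ ≤ 1 * (n + 1) := by gcongr
    _ ≤ n + 1 + 1 := by linarith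

/-- Uniform boundedness of `S^d(γ,1)`: every unit-volume star body whose
kernel contains `γ·B^d` is contained in the ball of radius
`R_γ = (d+1)/(γ^{d-1} κ_{d-1})`. -/
theorem Sg1_uniformly_bounded {d : ℕ} (hd : 2 ≤ d) (γ : ℝ) (hγ : 0 < γ)
    (K : Set (Euc d)) (hK : IsStarBody K)
    (hker : closedBall (0 : Euc d) γ ⊆ starKernel K)
    (hvol : volume K = 1) :
    K ⊆ closedBall (0 : Euc d)
      ((d + 1) / (γ ^ (d - 1) * (volume (closedBall (0 : Euc (d - 1)) 1)).toReal)) :=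
  Sg1_uniformly_bounded_general hd γ hγ K hker hvol
end
end
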